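/- arXiv:2305.07588 — 8 statements merged into one kernel-verified Lean document; each statement's English description precedes it below -/
import Mathlib

section
/- Let 𝔤 be a finite-dimensional real vector space, let J be a finite index set, for each x ∈ J let 𝔥_x be a linear subspace of 𝔤, and let C ⊆ J × J be a set of ordered pairs such that 𝔥_x ⊆ 𝔥_y whenever (x,y) ∈ C. Let N = {v : J → 𝔤 : for all (x,y) ∈ C, −v(x) + v(y) ∈ 𝔥_y}, a linear subspace of the space of functions J → 𝔤, and let π : (J → 𝔤) → ∏_{x∈J} 𝔤/𝔥_x be the componentwise quotient map. Then dim(N) ≥ |J|·dim(𝔤) − Σ_{(x,y)∈C} dim(𝔤/𝔥_y), and dim(π(N)) ≥ Σ_{x∈J} dim(𝔤/𝔥_x) − Σ_{(x,y)∈C} dim(𝔤/𝔥_y). -/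
/-- Maxwell-type bound for a system of subspace constraints indexed by a
finite set `J` with constraint pairs `C`: if `N = {v : J → 𝔤 | ∀ (x,y) ∈ C, -v x + v y ∈ 𝔥 y}`
and `π` is the componentwise quotient map, then
`dim N ≥ |J|·dim 𝔤 - Σ_{(x,y)∈C} dim (𝔤/𝔥 y)` and
`dim π(N) ≥ Σ_{x∈J} dim (𝔤/𝔥 x) - Σ_{(x,y)∈C} dim (𝔤/𝔥 y)`. -/
theorem statement_5 {J : Type*} [Fintype J] {𝔤 : Type*} [AddCommGroup 𝔤] [Module ℝ 𝔤]
    [FiniteDimensional ℝ 𝔤]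
    (𝔥 : J → Submodule ℝ 𝔤) (C : Finset (J × J))
    (hC : ∀ p ∈ C, 𝔥 p.1 ≤ 𝔥 p.2)
    (N : Submodule ℝ (J → 𝔤))
    (hN : ∀ v, v ∈ N ↔ ∀ p ∈ C, -v p.1 + v p.2 ∈ 𝔥 p.2)
    (π : (J → 𝔤) →ₗ[ℝ] ∀ x : J, 𝔤 ⧸ 𝔥 x)
    (hπ : ∀ v x, π v x = Submodule.Quotient.mk (v x)) :
    (Fintype.card J : ℤ) * Module.finrank ℝ 𝔤
        - ∑ p ∈ C, (Module.finrank ℝ (𝔤 ⧸ 𝔥 p.2) : ℤ) ≤ Module.finrank ℝ ↥N ∧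
    (∑ x : J, (Module.finrank ℝ (𝔤 ⧸ 𝔥 x) : ℤ))
        - ∑ p ∈ C, (Module.finrank ℝ (𝔤 ⧸ 𝔥 p.2) : ℤ) ≤
      Module.finrank ℝ ↥(N.map π) := by
  classical
  set a : ℕ := Fintype.card J * Module.finrank ℝ 𝔤 with ha
  set c : ℕ := ∑ p ∈ C, Module.finrank ℝ (𝔤 ⧸ 𝔥 p.2) with hc
  set s : ℕ := ∑ x : J, Module.finrank ℝ (𝔤 ⧸ 𝔥 x) with hs
  -- dimension of the full space
  have hdim : Module.finrank ℝ (J → 𝔤) = a := by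
    rw [Module.finrank_pi_fintype, Finset.sum_const, smul_eq_mul]
    rfl
  -- constraint map
  let Φ : (J → 𝔤) →ₗ[ℝ] (∀ p : C, 𝔤 ⧸ 𝔥 (p : J × J).2) :=
    LinearMap.pi fun p =>
      (𝔥 (p : J × J).2).mkQ.comp (((LinearMap.proj (p : J × J).2 : (J → 𝔤) →ₗ[ℝ] 𝔤)) - LinearMap.proj (p : J × J).1)
  have hker : LinearMap.ker Φ = N := by
    ext v
    simp only [Φ, LinearMap.mem_ker, hN, funext_iff, LinearMap.pi_apply, Pi.zero_apply,
      LinearMap.comp_apply, LinearMap.sub_apply, LinearMap.proj_apply,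
      Submodule.mkQ_apply, Submodule.Quotient.mk_eq_zero]
    constructor
    · intro h p hp
      have := h ⟨p, hp⟩
      simpa [neg_add_eq_sub] using this
    · intro h p
      simpa [neg_add_eq_sub] using h p.1 p.2
  have hcodim : Module.finrank ℝ (∀ p : C, 𝔤 ⧸ 𝔥 (p : J × J).2) = c := by
    rw [Module.finrank_pi_fintype, hc]
    rw [← Finset.sum_attach C fun p => Module.finrank ℝ (𝔤 ⧸ 𝔥 p.2)]
    exact Finset.sum_congr rfl fun p _ => rfl
  have hrankN : Module.finrank ℝ ↥(LinearMap.range Φ) + Module.finrank ℝ ↥N = a := by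
    rw [← hker, LinearMap.finrank_range_add_finrank_ker Φ, hdim]
  have hrange_le : Module.finrank ℝ ↥(LinearMap.range Φ) ≤ c := by
    rw [← hcodim]
    exact Submodule.finrank_le _
  -- π is surjective
  have hπsurj : Function.Surjective π := by
    intro w
    have : ∀ x, ∃ g : 𝔤, Submodule.Quotient.mk g = w x := fun x =>
      Submodule.Quotient.mk_surjective _ (w x)
    choose g hg using this
    exact ⟨g, funext fun x => by rw [hπ]; exact hg x⟩
  have hkerπ : Module.finrank ℝ ↥(LinearMap.ker π) + s = a := by
    have := LinearMap.finrank_range_add_finrank_ker π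
    rw [LinearMap.range_eq_top.mpr hπsurj, finrank_top, hdim,
      Module.finrank_pi_fintype, ← hs] at this
    omega
  -- restrict π to N
  have hrestr : Module.finrank ℝ ↥(N.map π)
      + Module.finrank ℝ ↥(LinearMap.ker (π.domRestrict N)) = Module.finrank ℝ ↥N := by
    have := LinearMap.finrank_range_add_finrank_ker (π.domRestrict N)
    rwa [LinearMap.range_domRestrict] at this
  have hkle : Module.finrank ℝ ↥(LinearMap.ker (π.domRestrict N))
      ≤ Module.finrank ℝ ↥(LinearMap.ker π) := by
    rw [← Submodule.finrank_map_subtype_eq N (LinearMap.ker (π.domRestrict N))]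
    apply Submodule.finrank_mono
    rintro x ⟨⟨y, hy⟩, hyk, rfl⟩
    simpa [LinearMap.mem_ker] using hyk
  have haz : ((a : ℕ) : ℤ) = (Fintype.card J : ℤ) * Module.finrank ℝ 𝔤 := by
    rw [ha]; push_cast; ring
  have hcz : (∑ p ∈ C, (Module.finrank ℝ (𝔤 ⧸ 𝔥 p.2) : ℤ)) = (c : ℤ) := by
    rw [hc]; push_cast; rfl
  have hsz : (∑ x : J, (Module.finrank ℝ (𝔤 ⧸ 𝔥 x) : ℤ)) = (s : ℤ) := by
    rw [hs]; push_cast; rfl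
  rw [hcz, hsz, ← haz]
  omega
end

section
/- Let Γ = (V,E) be a finite hypergraph with incidence set I = {(v,e) ∈ V×E : v ∈ e}, let 𝔤 be a finite-dimensional real vector space, and for each x ∈ V ∪ E ∪ I let 𝔥_x be a linear subspace of 𝔤 such that for every incidence i = (v,e) ∈ I one has 𝔥_i ⊆ 𝔥_v and 𝔥_i ⊆ 𝔥_e. Let A = {w : V ∪ E ∪ I → 𝔤 : for every incidence i=(v,e) ∈ I, −w(i) + w(v) ∈ 𝔥_v and −w(i) + w(e) ∈ 𝔥_e}, and let π : (V∪E∪I → 𝔤) → ∏_{x∈V∪E∪I} 𝔤/𝔥_x be the componentwise quotient map. Then dim(π(A)) ≥ Σ_{x∈V∪E} dim(𝔤/𝔥_x) + Σ_{i∈I} dim(𝔤/𝔥_i) − Σ_{(v,e)∈I} (dim(𝔤/𝔥_v) + dim(𝔤/𝔥_e)). -/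
set_option synthInstance.maxHeartbeats 1000000
set_option maxHeartbeats 1000000


/-- Maxwell-type lower bound on the dimension of the space of
infinitesimal motions of a graph-of-(Lie-)groups realisation of a finite hypergraph,
stated at the level of Lie algebras.  The hypergraph has vertex type `V`, hyperedge
type `E` with vertex set `ed e ⊆ V` for each hyperedge `e`, and incidence set
`I = {(v,e) | v ∈ ed e}`. -/
theorem statement_6 {V E : Type*} [Fintype V] [Fintype E]
    (ed : E → Set V) [DecidablePred fun p : V × E => p.1 ∈ ed p.2]
    {𝔤 : Type*} [AddCommGroup 𝔤] [Module ℝ 𝔤] [FiniteDimensional ℝ 𝔤]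
    (𝔥v : V → Submodule ℝ 𝔤) (𝔥e : E → Submodule ℝ 𝔤)
    (𝔥i : {p : V × E // p.1 ∈ ed p.2} → Submodule ℝ 𝔤)
    (hiv : ∀ i, 𝔥i i ≤ 𝔥v i.1.1) (hie : ∀ i, 𝔥i i ≤ 𝔥e i.1.2)
    (A : Submodule ℝ ((V ⊕ E ⊕ {p : V × E // p.1 ∈ ed p.2}) → 𝔤))
    (hA : ∀ w, w ∈ A ↔ ∀ i : {p : V × E // p.1 ∈ ed p.2},
      -w (Sum.inr (Sum.inr i)) + w (Sum.inl i.1.1) ∈ 𝔥v i.1.1 ∧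
      -w (Sum.inr (Sum.inr i)) + w (Sum.inr (Sum.inl i.1.2)) ∈ 𝔥e i.1.2)
    (π : ((V ⊕ E ⊕ {p : V × E // p.1 ∈ ed p.2}) → 𝔤) →ₗ[ℝ]
      ∀ x : V ⊕ E ⊕ {p : V × E // p.1 ∈ ed p.2},
        𝔤 ⧸ Sum.elim 𝔥v (Sum.elim 𝔥e 𝔥i) x)
    (hπ : ∀ w x, π w x = Submodule.Quotient.mk (w x)) :
    (∑ v : V, (Module.finrank ℝ (𝔤 ⧸ 𝔥v v) : ℤ))
      + (∑ e : E, (Module.finrank ℝ (𝔤 ⧸ 𝔥e e) : ℤ))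
      + (∑ i : {p : V × E // p.1 ∈ ed p.2}, (Module.finrank ℝ (𝔤 ⧸ 𝔥i i) : ℤ))
      - (∑ i : {p : V × E // p.1 ∈ ed p.2},
          ((Module.finrank ℝ (𝔤 ⧸ 𝔥v i.1.1) : ℤ) + (Module.finrank ℝ (𝔤 ⧸ 𝔥e i.1.2) : ℤ)))
      ≤ Module.finrank ℝ ↥(A.map π) := by
  classical
  -- the rigidity map
  let R : ((V ⊕ E ⊕ {p : V × E // p.1 ∈ ed p.2}) → 𝔤) →ₗ[ℝ] (∀ i : {p : V × E // p.1 ∈ ed p.2}, (𝔤 ⧸ 𝔥v i.1.1) × (𝔤 ⧸ 𝔥e i.1.2)) :=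
    LinearMap.pi fun i =>
      (((𝔥v i.1.1).mkQ.comp
        ((LinearMap.proj (Sum.inl i.1.1) : ((V ⊕ E ⊕ {p : V × E // p.1 ∈ ed p.2}) → 𝔤) →ₗ[ℝ] 𝔤)
          - LinearMap.proj (Sum.inr (Sum.inr i)))).prod
       (((𝔥e i.1.2).mkQ.comp
        ((LinearMap.proj (Sum.inr (Sum.inl i.1.2)) : ((V ⊕ E ⊕ {p : V × E // p.1 ∈ ed p.2}) → 𝔤) →ₗ[ℝ] 𝔤)
          - LinearMap.proj (Sum.inr (Sum.inr i))))))
  have hR : ∀ w i, R w i = (Submodule.Quotient.mk (w (Sum.inl i.1.1) - w (Sum.inr (Sum.inr i))),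
      Submodule.Quotient.mk (w (Sum.inr (Sum.inl i.1.2)) - w (Sum.inr (Sum.inr i)))) := by
    intro w i; rfl
  have hAker : A = LinearMap.ker R := by
    ext w
    rw [hA, LinearMap.mem_ker, funext_iff]
    refine forall_congr' fun i => ?_
    rw [hR, Prod.ext_iff]
    simp only [Prod.ext_iff, Submodule.Quotient.mk_eq_zero, neg_add_eq_sub, Prod.fst_zero, Prod.snd_zero, Pi.zero_apply]
  -- π is surjective
  have hπsurj : Function.Surjective π := by
    intro f
    choose w hw using fun x => Submodule.Quotient.mk_surjective _ (f x)
    exact ⟨w, funext fun x => (hπ w x).trans (hw x)⟩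
  -- ker π ≤ A
  have hkerA : LinearMap.ker π ≤ A := by
    intro w hw
    have hmem : ∀ x, w x ∈ Sum.elim 𝔥v (Sum.elim 𝔥e 𝔥i) x := by
      intro x
      have : π w x = 0 := by rw [LinearMap.mem_ker.mp hw]; rfl
      rw [hπ] at this
      exact (Submodule.Quotient.mk_eq_zero _).mp this
    rw [hA]
    intro i
    exact ⟨add_mem (neg_mem (hiv i (hmem (Sum.inr (Sum.inr i))))) (hmem (Sum.inl i.1.1)),
      add_mem (neg_mem (hie i (hmem (Sum.inr (Sum.inr i))))) (hmem (Sum.inr (Sum.inl i.1.2)))⟩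
  -- rank-nullity for π restricted to A
  have h1 : Module.finrank ℝ A =
      Module.finrank ℝ (A.map π) + Module.finrank ℝ (LinearMap.ker π) := by
    have e1 : LinearMap.range (π.comp A.subtype) = A.map π := by
      rw [LinearMap.range_comp, Submodule.range_subtype]
    have e2 : LinearMap.ker (π.comp A.subtype) = (LinearMap.ker π).comap A.subtype :=
      LinearMap.ker_comp _ _
    have e3 : Module.finrank ℝ (LinearMap.ker (π.comp A.subtype)) =
        Module.finrank ℝ (LinearMap.ker π) := by
      rw [e2]
      exact (Submodule.comapSubtypeEquivOfLe hkerA).finrank_eq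
    have := LinearMap.finrank_range_add_finrank_ker (π.comp A.subtype)
    rw [e1, e3] at this
    exact this.symm
  -- rank-nullity for π
  have h2 : Module.finrank ℝ ((V ⊕ E ⊕ {p : V × E // p.1 ∈ ed p.2}) → 𝔤) =
      (∑ x : V ⊕ E ⊕ {p : V × E // p.1 ∈ ed p.2}, Module.finrank ℝ (𝔤 ⧸ Sum.elim 𝔥v (Sum.elim 𝔥e 𝔥i) x))
        + Module.finrank ℝ (LinearMap.ker π) := by
    have := LinearMap.finrank_range_add_finrank_ker π
    rw [LinearMap.range_eq_top.mpr hπsurj, finrank_top, Module.finrank_pi_fintype] at this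
    exact this.symm
  -- rank-nullity for R
  have h3 : Module.finrank ℝ ((V ⊕ E ⊕ {p : V × E // p.1 ∈ ed p.2}) → 𝔤) =
      Module.finrank ℝ (LinearMap.range R) + Module.finrank ℝ A := by
    rw [hAker]; exact (LinearMap.finrank_range_add_finrank_ker R).symm
  have h4 : Module.finrank ℝ (LinearMap.range R) ≤
      ∑ i : {p : V × E // p.1 ∈ ed p.2}, (Module.finrank ℝ (𝔤 ⧸ 𝔥v i.1.1) + Module.finrank ℝ (𝔤 ⧸ 𝔥e i.1.2)) := by
    calc Module.finrank ℝ (LinearMap.range R)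
        ≤ Module.finrank ℝ (∀ i : {p : V × E // p.1 ∈ ed p.2}, (𝔤 ⧸ 𝔥v i.1.1) × (𝔤 ⧸ 𝔥e i.1.2)) :=
          Submodule.finrank_le _
      _ = ∑ i : {p : V × E // p.1 ∈ ed p.2}, (Module.finrank ℝ (𝔤 ⧸ 𝔥v i.1.1) + Module.finrank ℝ (𝔤 ⧸ 𝔥e i.1.2)) := by
          rw [Module.finrank_pi_fintype]
          exact Finset.sum_congr rfl fun i _ => Module.finrank_prod
  -- split the sum over the sum type
  have h5 : (∑ x : V ⊕ E ⊕ {p : V × E // p.1 ∈ ed p.2}, Module.finrank ℝ (𝔤 ⧸ Sum.elim 𝔥v (Sum.elim 𝔥e 𝔥i) x)) =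
      (∑ v : V, Module.finrank ℝ (𝔤 ⧸ 𝔥v v)) + ((∑ e : E, Module.finrank ℝ (𝔤 ⧸ 𝔥e e))
        + ∑ i : {p : V × E // p.1 ∈ ed p.2}, Module.finrank ℝ (𝔤 ⧸ 𝔥i i)) := by
    rw [Fintype.sum_sum_type, Fintype.sum_sum_type]; rfl
  zify at h1 h2 h3 h4 h5 ⊢
  omega
end

section
/- Let Γ = (V,E) be a finite hypergraph with incidence set I = {(v,e) ∈ V×E : v ∈ e}, let 𝔤 be a finite-dimensional real vector space, and for each x ∈ V ∪ E ∪ I let 𝔥_x ⊆ 𝔤 be a linear subspace such that 𝔥_i ⊆ 𝔥_v and 𝔥_i ⊆ 𝔥_e for every incidence i=(v,e). Assume there are integers k₁, k₂, λ with dim(𝔥_v) = dim(𝔤) − k₁ for all v ∈ V, dim(𝔥_e) = dim(𝔤) − k₂ for all e ∈ E, and dim(𝔥_i) = dim(𝔤) − k₁ − k₂ + λ for all i ∈ I. Let A = {w : V∪E∪I → 𝔤 : for every incidence i=(v,e), −w(i)+w(v) ∈ 𝔥_v and −w(i)+w(e) ∈ 𝔥_e}, let π be the componentwise quotient map onto ∏_x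 𝔤/𝔥_x, and let Δ = {constant functions x ↦ g, g ∈ 𝔤} ⊆ A. Suppose π(A) = π(Δ) (infinitesimal rigidity) and λ|I| = k₁|V| + k₂|E| − dim(𝔤). Then for every subset I' ⊆ I with ⋂_{i∈I'} 𝔥_i = {0}, one has λ|I'| ≤ k₁|V(I')| + k₂|E(I')| − dim(𝔤), where V(I') = {v ∈ V : (v,e) ∈ I' for some e} and E(I') = {e ∈ E : (v,e) ∈ I' for some v}. -/
open Module

private lemma aux_surj_finrank {M N : Type*} [AddCommGroup M] [Module ℝ M]
    [FiniteDimensional ℝ M] [AddCommGroup N] [Module ℝ N] (f : M →ₗ[ℝ] N)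
    (hf : Function.Surjective f) :
    finrank ℝ (LinearMap.ker f) + finrank ℝ N = finrank ℝ M := by
  have h := LinearMap.finrank_range_add_finrank_ker f
  rwa [LinearMap.range_eq_top.mpr hf, finrank_top, add_comm] at h

private lemma aux_finrank_pi {ι : Type*} [Fintype ι] {𝔤 : Type*} [AddCommGroup 𝔤]
    [Module ℝ 𝔤] [FiniteDimensional ℝ 𝔤] (p : ι → Submodule ℝ 𝔤) :
    finrank ℝ (Submodule.pi Set.univ p) = ∑ i, finrank ℝ (p i) := by
  classical
  let Q : (ι → 𝔤) →ₗ[ℝ] ∀ i, 𝔤 ⧸ p i :=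
    LinearMap.pi fun i => (p i).mkQ.comp (LinearMap.proj i)
  have hker : LinearMap.ker Q = Submodule.pi Set.univ p := by
    ext w
    simp [Q, LinearMap.mem_ker, funext_iff, Submodule.Quotient.mk_eq_zero,
      Submodule.mem_pi, LinearMap.pi_apply]
  have hsurj : Function.Surjective Q := by
    intro q
    choose g hg using fun i => Submodule.Quotient.mk_surjective (p i) (q i)
    exact ⟨g, funext fun i => hg i⟩
  have h := aux_surj_finrank Q hsurj
  rw [hker] at h
  have h2 : finrank ℝ (∀ i, 𝔤 ⧸ p i) = ∑ i, finrank ℝ (𝔤 ⧸ p i) :=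
    Module.finrank_pi_fintype ℝ
  have h3 : finrank ℝ (ι → 𝔤) = ∑ _i : ι, finrank ℝ 𝔤 := Module.finrank_pi_fintype ℝ
  have h5 : ∑ _i : ι, finrank ℝ 𝔤
      = (∑ i, finrank ℝ (𝔤 ⧸ p i)) + ∑ i, finrank ℝ (p i) := by
    rw [← Finset.sum_add_distrib]
    exact Finset.sum_congr rfl fun i _ => ((p i).finrank_quotient_add_finrank).symm
  rw [h2, h3, h5] at h
  omega

private lemma aux_finrank_le_map_add_ker {M N : Type*} [AddCommGroup M] [Module ℝ M]
    [FiniteDimensional ℝ M] [AddCommGroup N] [Module ℝ N] (f : M →ₗ[ℝ] N)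
    (p : Submodule ℝ M) :
    finrank ℝ p ≤ finrank ℝ (p.map f) + finrank ℝ (LinearMap.ker f) := by
  have h := LinearMap.finrank_range_add_finrank_ker (f.domRestrict p)
  rw [LinearMap.range_domRestrict] at h
  have hk : finrank ℝ (LinearMap.ker (f.domRestrict p)) ≤ finrank ℝ (LinearMap.ker f) := by
    rw [LinearMap.ker_domRestrict]
    have he : Submodule.comap p.subtype (LinearMap.ker f)
        = Submodule.comap p.subtype (LinearMap.ker f ⊓ p) := by
      ext x; simp [x.2]
    rw [he,
      (Submodule.comapSubtypeEquivOfLe (inf_le_right : LinearMap.ker f ⊓ p ≤ p)).finrank_eq]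
    exact Submodule.finrank_mono inf_le_left
  omega

private lemma aux_sum_const_cast {ι : Type*} [Fintype ι] (f : ι → ℕ) (c : ℤ)
    (h : ∀ i, (f i : ℤ) = c) : (∑ i, ((f i : ℤ))) = Fintype.card ι * c := by
  rw [Finset.sum_congr rfl fun i _ => h i, Finset.sum_const, Finset.card_univ, nsmul_eq_mul]

private lemma aux_sum_const {ι : Type*} [Fintype ι] (f : ι → ℕ) (c : ℤ)
    (h : ∀ i, (f i : ℤ) = c) : ((∑ i, f i : ℕ) : ℤ) = Fintype.card ι * c := by
  push_cast
  rw [Finset.sum_congr rfl fun i _ => h i, Finset.sum_const, Finset.card_univ, nsmul_eq_mul]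

/-- The necessary sparsity count for minimal infinitesimal rigidity of a
graph-of-groups realisation of a finite hypergraph, stated at the level of Lie algebras:
if the realisation is infinitesimally rigid (`π(A) = π(Δ)`, where `Δ` is the diagonal of
constant functions) and `λ|I| = k₁|V| + k₂|E| - dim 𝔤`, then every subset `I'` of the
incidences with `⋂_{i∈I'} 𝔥ᵢ = 0` satisfies `λ|I'| ≤ k₁|V(I')| + k₂|E(I')| - dim 𝔤`. -/
theorem statement_7 {V E : Type*} [Fintype V] [Fintype E] [DecidableEq V] [DecidableEq E]
    (ed : E → Set V) [DecidablePred fun p : V × E => p.1 ∈ ed p.2]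
    {𝔤 : Type*} [AddCommGroup 𝔤] [Module ℝ 𝔤] [FiniteDimensional ℝ 𝔤]
    (𝔥v : V → Submodule ℝ 𝔤) (𝔥e : E → Submodule ℝ 𝔤)
    (𝔥i : {p : V × E // p.1 ∈ ed p.2} → Submodule ℝ 𝔤)
    (hiv : ∀ i, 𝔥i i ≤ 𝔥v i.1.1) (hie : ∀ i, 𝔥i i ≤ 𝔥e i.1.2)
    (k₁ k₂ lam : ℤ)
    (hk₁ : ∀ v, (Module.finrank ℝ ↥(𝔥v v) : ℤ) = Module.finrank ℝ 𝔤 - k₁)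
    (hk₂ : ∀ e, (Module.finrank ℝ ↥(𝔥e e) : ℤ) = Module.finrank ℝ 𝔤 - k₂)
    (hlam : ∀ i, (Module.finrank ℝ ↥(𝔥i i) : ℤ) = Module.finrank ℝ 𝔤 - k₁ - k₂ + lam)
    (A : Submodule ℝ ((V ⊕ E ⊕ {p : V × E // p.1 ∈ ed p.2}) → 𝔤))
    (hA : ∀ w, w ∈ A ↔ ∀ i : {p : V × E // p.1 ∈ ed p.2},
      -w (Sum.inr (Sum.inr i)) + w (Sum.inl i.1.1) ∈ 𝔥v i.1.1 ∧
      -w (Sum.inr (Sum.inr i)) + w (Sum.inr (Sum.inl i.1.2)) ∈ 𝔥e i.1.2)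
    (Δ : Submodule ℝ ((V ⊕ E ⊕ {p : V × E // p.1 ∈ ed p.2}) → 𝔤))
    (hΔ : ∀ w, w ∈ Δ ↔ ∃ g : 𝔤, w = fun _ => g)
    (π : ((V ⊕ E ⊕ {p : V × E // p.1 ∈ ed p.2}) → 𝔤) →ₗ[ℝ]
      ∀ x : V ⊕ E ⊕ {p : V × E // p.1 ∈ ed p.2},
        𝔤 ⧸ Sum.elim 𝔥v (Sum.elim 𝔥e 𝔥i) x)
    (hπ : ∀ w x, π w x = Submodule.Quotient.mk (w x))
    (hrigid : A.map π = Δ.map π)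
    (hcount : lam * (Fintype.card {p : V × E // p.1 ∈ ed p.2} : ℤ)
      = k₁ * Fintype.card V + k₂ * Fintype.card E - Module.finrank ℝ 𝔤) :
    ∀ I' : Finset {p : V × E // p.1 ∈ ed p.2},
      (⨅ i ∈ I', 𝔥i i) = ⊥ →
      lam * (I'.card : ℤ) ≤
        k₁ * ((I'.image fun i => i.1.1).card : ℤ)
          + k₂ * ((I'.image fun i => i.1.2).card : ℤ)
          - Module.finrank ℝ 𝔤 := by
  classical
  intro I' hI'
  rcases I'.eq_empty_or_nonempty with rfl | ⟨i₀, hi₀⟩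
  · -- empty case: the infimum over the empty set is ⊤, so ⊤ = ⊥ and 𝔤 is trivial
    simp only [Finset.notMem_empty, iInf_false, iInf_top] at hI'
    have hsub : Subsingleton 𝔤 := by
      constructor
      intro a b
      have ha : a - b ∈ (⊥ : Submodule ℝ 𝔤) := hI' ▸ Submodule.mem_top
      exact sub_eq_zero.mp ((Submodule.mem_bot ℝ).mp ha)
    have h0 : finrank ℝ 𝔤 = 0 := Module.finrank_zero_of_subsingleton
    simp [h0]
  · -- main case: I' nonempty
    set d : ℤ := (finrank ℝ 𝔤 : ℤ) with hdd
    -- basic quotient dimension facts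
    have hq1 : ∀ v : V, (finrank ℝ (𝔤 ⧸ 𝔥v v) : ℤ) = k₁ := by
      intro v
      have h := (𝔥v v).finrank_quotient_add_finrank
      have h2 := hk₁ v
      omega
    have hq2 : ∀ e : E, (finrank ℝ (𝔤 ⧸ 𝔥e e) : ℤ) = k₂ := by
      intro e
      have h := (𝔥e e).finrank_quotient_add_finrank
      have h2 := hk₂ e
      omega
    have hq3 : ∀ i : {p : V × E // p.1 ∈ ed p.2}, (finrank ℝ (𝔤 ⧸ 𝔥i i) : ℤ) = k₁ + k₂ - lam := by
      intro i
      have h := (𝔥i i).finrank_quotient_add_finrank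
      have h2 := hlam i
      omega
    -- the rigidity map R
    let R : ((V ⊕ E ⊕ {p : V × E // p.1 ∈ ed p.2}) → 𝔤) →ₗ[ℝ]
        (∀ i : {p : V × E // p.1 ∈ ed p.2}, (𝔤 ⧸ 𝔥v i.1.1) × (𝔤 ⧸ 𝔥e i.1.2)) :=
      LinearMap.pi fun i =>
        ((𝔥v i.1.1).mkQ ∘ₗ
            ((LinearMap.proj (R := ℝ) (φ := fun _ : V ⊕ E ⊕ {p : V × E // p.1 ∈ ed p.2} => 𝔤)
              (Sum.inl i.1.1)) - LinearMap.proj (Sum.inr (Sum.inr i)))).prod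
          ((𝔥e i.1.2).mkQ ∘ₗ
            ((LinearMap.proj (R := ℝ) (φ := fun _ : V ⊕ E ⊕ {p : V × E // p.1 ∈ ed p.2} => 𝔤)
              (Sum.inr (Sum.inl i.1.2))) - LinearMap.proj (Sum.inr (Sum.inr i))))
    have hRapply : ∀ w i, R w i =
        (Submodule.Quotient.mk (w (Sum.inl i.1.1) - w (Sum.inr (Sum.inr i))),
         Submodule.Quotient.mk (w (Sum.inr (Sum.inl i.1.2)) - w (Sum.inr (Sum.inr i)))) :=
      fun w i => rfl
    have hkerR : LinearMap.ker R = A := by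
      ext w
      rw [LinearMap.mem_ker, hA, funext_iff]
      refine forall_congr' fun i => ?_
      rw [hRapply, Pi.zero_apply, Prod.ext_iff]
      simp [Prod.ext_iff, Submodule.Quotient.mk_eq_zero, neg_add_eq_sub, sub_eq_zero,
        Submodule.Quotient.eq]
    -- the diagonal
    let c : 𝔤 →ₗ[ℝ] ((V ⊕ E ⊕ {p : V × E // p.1 ∈ ed p.2}) → 𝔤) :=
      LinearMap.pi fun _ => LinearMap.id
    have hΔr : Δ = LinearMap.range c := by
      ext w
      rw [hΔ, LinearMap.mem_range]
      constructor
      · rintro ⟨g, rfl⟩; exact ⟨g, rfl⟩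
      · rintro ⟨g, rfl⟩; exact ⟨g, rfl⟩
    have hcinj : Function.Injective c := fun a b hab => congrFun hab (Sum.inr (Sum.inr i₀))
    have hΔd : finrank ℝ Δ = finrank ℝ 𝔤 := by
      rw [hΔr]; exact LinearMap.finrank_range_of_inj hcinj
    -- kernel of π
    have hkerπ : LinearMap.ker π = Submodule.pi Set.univ (Sum.elim 𝔥v (Sum.elim 𝔥e 𝔥i)) := by
      ext w
      constructor
      · intro h x _
        have hx := congrFun (LinearMap.mem_ker.mp h) x
        rw [hπ] at hx
        exact (Submodule.Quotient.mk_eq_zero _).mp hx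
      · intro h
        rw [LinearMap.mem_ker]
        funext x
        rw [hπ, Pi.zero_apply]
        exact (Submodule.Quotient.mk_eq_zero _).mpr (h x (Set.mem_univ x))
    -- dimension of the kernel of π
    have hkerπn := aux_finrank_pi (Sum.elim 𝔥v (Sum.elim 𝔥e 𝔥i))
    rw [Fintype.sum_sum_type, Fintype.sum_sum_type] at hkerπn
    simp only [Sum.elim_inl, Sum.elim_inr] at hkerπn
    have hkerπd : (finrank ℝ (LinearMap.ker π) : ℤ)
        = Fintype.card V * (d - k₁) + Fintype.card E * (d - k₂)
          + Fintype.card {p : V × E // p.1 ∈ ed p.2} * (d - k₁ - k₂ + lam) := by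
      rw [hkerπ, hkerπn]
      push_cast
      erw [aux_sum_const_cast _ _ hk₁, aux_sum_const_cast _ _ hk₂, aux_sum_const_cast _ _ hlam]
      ring
    -- dimension of the full function space
    have hFdim : (finrank ℝ ((V ⊕ E ⊕ {p : V × E // p.1 ∈ ed p.2}) → 𝔤) : ℤ)
        = (Fintype.card V + Fintype.card E + Fintype.card {p : V × E // p.1 ∈ ed p.2}) * d := by
      rw [Module.finrank_pi_fintype ℝ, aux_sum_const _ d fun _ => rfl, Fintype.card_sum,
        Fintype.card_sum]
      push_cast
      ring
    -- dimension of the target of R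
    have hTdim : (finrank ℝ (∀ i : {p : V × E // p.1 ∈ ed p.2},
          (𝔤 ⧸ 𝔥v i.1.1) × (𝔤 ⧸ 𝔥e i.1.2)) : ℤ)
        = Fintype.card {p : V × E // p.1 ∈ ed p.2} * (k₁ + k₂) := by
      rw [Module.finrank_pi_fintype ℝ]
      refine aux_sum_const _ _ fun i => ?_
      rw [Module.finrank_prod]
      push_cast
      rw [hq1, hq2]
    -- rank-nullity and rigidity give surjectivity of R
    have h3 := LinearMap.finrank_range_add_finrank_ker R
    rw [hkerR] at h3
    have hA2 : finrank ℝ (A.map π) ≤ finrank ℝ 𝔤 := by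
      rw [hrigid]
      exact (Submodule.finrank_map_le π Δ).trans hΔd.le
    have hAle : finrank ℝ A ≤ finrank ℝ 𝔤 + finrank ℝ (LinearMap.ker π) :=
      (aux_finrank_le_map_add_ker π A).trans (Nat.add_le_add_right hA2 _)
    have hz1 : (finrank ℝ (LinearMap.range R) : ℤ) + finrank ℝ A
        = finrank ℝ ((V ⊕ E ⊕ {p : V × E // p.1 ∈ ed p.2}) → 𝔤) := by exact_mod_cast h3
    have hz2 : (finrank ℝ A : ℤ) ≤ d + finrank ℝ (LinearMap.ker π) := by
      rw [hdd]; exact_mod_cast hAle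
    have hrge : (finrank ℝ (∀ i : {p : V × E // p.1 ∈ ed p.2},
          (𝔤 ⧸ 𝔥v i.1.1) × (𝔤 ⧸ 𝔥e i.1.2)) : ℤ) ≤ finrank ℝ (LinearMap.range R) := by
      rw [hTdim]
      linarith [hz1, hz2, hkerπd, hFdim, hcount]
    have hT_eq : finrank ℝ (LinearMap.range R) = finrank ℝ (∀ i : {p : V × E // p.1 ∈ ed p.2},
          (𝔤 ⧸ 𝔥v i.1.1) × (𝔤 ⧸ 𝔥e i.1.2)) :=
      le_antisymm (Submodule.finrank_le _) (by exact_mod_cast hrge)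
    have hRsurj : Function.Surjective R := by
      rw [← LinearMap.range_eq_top]
      exact Submodule.eq_top_of_finrank_eq hT_eq
    -- Stage 2: restrict to the incidences in I'
    let pr : (∀ i : {p : V × E // p.1 ∈ ed p.2}, (𝔤 ⧸ 𝔥v i.1.1) × (𝔤 ⧸ 𝔥e i.1.2)) →ₗ[ℝ]
        (∀ j : {i : {p : V × E // p.1 ∈ ed p.2} // i ∈ I'},
          (𝔤 ⧸ 𝔥v j.1.1.1) × (𝔤 ⧸ 𝔥e j.1.1.2)) :=
      LinearMap.pi fun j => LinearMap.proj j.1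
    have hprsurj : Function.Surjective pr := by
      intro q
      refine ⟨fun i => if h : i ∈ I' then q ⟨i, h⟩ else 0, funext fun j => ?_⟩
      have : pr (fun i => if h : i ∈ I' then q ⟨i, h⟩ else 0) j
          = if h : (j : {p : V × E // p.1 ∈ ed p.2}) ∈ I' then q ⟨j, h⟩ else 0 := rfl
      rw [this, dif_pos j.2]
    let R' := pr ∘ₗ R
    have hR'surj : Function.Surjective R' := hprsurj.comp hRsurj
    have h4 := aux_surj_finrank R' hR'surj
    have hR'apply : ∀ w (j : {i : {p : V × E // p.1 ∈ ed p.2} // i ∈ I'}), R' w j =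
        (Submodule.Quotient.mk (w (Sum.inl j.1.1.1) - w (Sum.inr (Sum.inr j.1))),
         Submodule.Quotient.mk (w (Sum.inr (Sum.inl j.1.1.2)) - w (Sum.inr (Sum.inr j.1)))) :=
      fun w j => rfl
    -- the big subspace K'
    have hK'le : Submodule.pi Set.univ (Sum.elim (fun v => if v ∈ I'.image (fun i => i.1.1) then 𝔥v v else (⊤ : Submodule ℝ 𝔤))
        (Sum.elim (fun e => if e ∈ I'.image (fun i => i.1.2) then 𝔥e e else (⊤ : Submodule ℝ 𝔤))
          (fun i => if i ∈ I' then 𝔥i i else (⊤ : Submodule ℝ 𝔤)))) ≤ LinearMap.ker R' := by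
      intro w hw
      rw [Submodule.mem_pi] at hw
      rw [LinearMap.mem_ker]
      funext j
      have hi' : w (Sum.inr (Sum.inr j.1)) ∈ (if (j : {p : V × E // p.1 ∈ ed p.2}) ∈ I'
          then 𝔥i j.1 else (⊤ : Submodule ℝ 𝔤)) := hw (Sum.inr (Sum.inr j.1)) (Set.mem_univ _)
      rw [if_pos j.2] at hi'
      have hv' : w (Sum.inl j.1.1.1) ∈ (if j.1.1.1 ∈ I'.image (fun i => i.1.1)
          then 𝔥v j.1.1.1 else (⊤ : Submodule ℝ 𝔤)) := hw (Sum.inl j.1.1.1) (Set.mem_univ _)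
      rw [if_pos (Finset.mem_image_of_mem _ j.2)] at hv'
      have he' : w (Sum.inr (Sum.inl j.1.1.2)) ∈ (if j.1.1.2 ∈ I'.image (fun i => i.1.2)
          then 𝔥e j.1.1.2 else (⊤ : Submodule ℝ 𝔤)) := hw (Sum.inr (Sum.inl j.1.1.2)) (Set.mem_univ _)
      rw [if_pos (Finset.mem_image_of_mem _ j.2)] at he'
      rw [hR'apply, Pi.zero_apply, Prod.ext_iff]
      simp only [Prod.fst_zero, Prod.snd_zero, Submodule.Quotient.mk_eq_zero]
      exact ⟨sub_mem hv' (hiv j.1 hi'), sub_mem he' (hie j.1 hi')⟩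
    have hΔle : Δ ≤ LinearMap.ker R' := by
      intro w hw
      obtain ⟨g, rfl⟩ := (hΔ w).mp hw
      rw [LinearMap.mem_ker]
      funext j
      rw [hR'apply, Pi.zero_apply]
      simp
    have hinf : Δ ⊓ Submodule.pi Set.univ (Sum.elim (fun v => if v ∈ I'.image (fun i => i.1.1) then 𝔥v v else (⊤ : Submodule ℝ 𝔤))
        (Sum.elim (fun e => if e ∈ I'.image (fun i => i.1.2) then 𝔥e e else (⊤ : Submodule ℝ 𝔤))
          (fun i => if i ∈ I' then 𝔥i i else (⊤ : Submodule ℝ 𝔤)))) = ⊥ := by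
      rw [eq_bot_iff]
      intro w hw0
      rw [Submodule.mem_inf] at hw0
      obtain ⟨hwΔ, hwK⟩ := hw0
      obtain ⟨g, rfl⟩ := (hΔ _).mp hwΔ
      rw [Submodule.mem_pi] at hwK
      have hg : g ∈ ⨅ i ∈ I', 𝔥i i := by
        simp only [Submodule.mem_iInf]
        intro i hi
        have h5 : g ∈ (if i ∈ I' then 𝔥i i else (⊤ : Submodule ℝ 𝔤)) :=
          hwK (Sum.inr (Sum.inr i)) (Set.mem_univ _)
        rwa [if_pos hi] at h5
      rw [hI', Submodule.mem_bot] at hg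
      rw [Submodule.mem_bot]
      funext x
      simp [hg]
    have hsup := Submodule.finrank_sup_add_finrank_inf_eq Δ (Submodule.pi Set.univ (Sum.elim (fun v => if v ∈ I'.image (fun i => i.1.1) then 𝔥v v else (⊤ : Submodule ℝ 𝔤))
        (Sum.elim (fun e => if e ∈ I'.image (fun i => i.1.2) then 𝔥e e else (⊤ : Submodule ℝ 𝔤))
          (fun i => if i ∈ I' then 𝔥i i else (⊤ : Submodule ℝ 𝔤)))))
    rw [hinf] at hsup
    simp only [finrank_bot, add_zero] at hsup
    have hle2 : finrank ℝ ↥(Δ ⊔ Submodule.pi Set.univ (Sum.elim (fun v => if v ∈ I'.image (fun i => i.1.1) then 𝔥v v else (⊤ : Submodule ℝ 𝔤))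
        (Sum.elim (fun e => if e ∈ I'.image (fun i => i.1.2) then 𝔥e e else (⊤ : Submodule ℝ 𝔤))
          (fun i => if i ∈ I' then 𝔥i i else (⊤ : Submodule ℝ 𝔤))))) ≤ finrank ℝ (LinearMap.ker R') :=
      Submodule.finrank_mono (sup_le hΔle hK'le)
    -- dimension of K'
    have hK'n := aux_finrank_pi (Sum.elim (fun v => if v ∈ I'.image (fun i => i.1.1) then 𝔥v v else (⊤ : Submodule ℝ 𝔤))
        (Sum.elim (fun e => if e ∈ I'.image (fun i => i.1.2) then 𝔥e e else (⊤ : Submodule ℝ 𝔤))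
          (fun i => if i ∈ I' then 𝔥i i else (⊤ : Submodule ℝ 𝔤))))
    rw [Fintype.sum_sum_type, Fintype.sum_sum_type] at hK'n
    simp only [Sum.elim_inl, Sum.elim_inr] at hK'n
    have hKv : ∑ v : V, ((finrank ℝ
          ↥(if v ∈ I'.image (fun i => i.1.1) then 𝔥v v else (⊤ : Submodule ℝ 𝔤)) : ℕ) : ℤ)
        = Fintype.card V * d - (I'.image fun i => i.1.1).card * k₁ := by
      have hterm : ∀ v : V, ((finrank ℝ
            ↥(if v ∈ I'.image (fun i => i.1.1) then 𝔥v v else (⊤ : Submodule ℝ 𝔤)) : ℕ) : ℤ)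
          = d - (if v ∈ I'.image (fun i => i.1.1) then k₁ else 0) := by
        intro v
        by_cases hv : v ∈ I'.image (fun i => i.1.1)
        · rw [if_pos hv, if_pos hv, hk₁ v]
        · rw [if_neg hv, if_neg hv, finrank_top, sub_zero, hdd]
      rw [Finset.sum_congr rfl fun v _ => hterm v, Finset.sum_sub_distrib, Finset.sum_const,
        Finset.card_univ, Finset.sum_ite_mem, Finset.univ_inter, Finset.sum_const]
      simp [nsmul_eq_mul]
    have hKe : ∑ e : E, ((finrank ℝ
          ↥(if e ∈ I'.image (fun i => i.1.2) then 𝔥e e else (⊤ : Submodule ℝ 𝔤)) : ℕ) : ℤ)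
        = Fintype.card E * d - (I'.image fun i => i.1.2).card * k₂ := by
      have hterm : ∀ e : E, ((finrank ℝ
            ↥(if e ∈ I'.image (fun i => i.1.2) then 𝔥e e else (⊤ : Submodule ℝ 𝔤)) : ℕ) : ℤ)
          = d - (if e ∈ I'.image (fun i => i.1.2) then k₂ else 0) := by
        intro e
        by_cases he : e ∈ I'.image (fun i => i.1.2)
        · rw [if_pos he, if_pos he, hk₂ e]
        · rw [if_neg he, if_neg he, finrank_top, sub_zero, hdd]
      rw [Finset.sum_congr rfl fun e _ => hterm e, Finset.sum_sub_distrib, Finset.sum_const,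
        Finset.card_univ, Finset.sum_ite_mem, Finset.univ_inter, Finset.sum_const]
      simp [nsmul_eq_mul]
    have hKi : ∑ i : {p : V × E // p.1 ∈ ed p.2}, ((finrank ℝ
          ↥(if i ∈ I' then 𝔥i i else (⊤ : Submodule ℝ 𝔤)) : ℕ) : ℤ)
        = Fintype.card {p : V × E // p.1 ∈ ed p.2} * d - I'.card * (k₁ + k₂ - lam) := by
      have hterm : ∀ i : {p : V × E // p.1 ∈ ed p.2}, ((finrank ℝ
            ↥(if i ∈ I' then 𝔥i i else (⊤ : Submodule ℝ 𝔤)) : ℕ) : ℤ)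
          = d - (if i ∈ I' then k₁ + k₂ - lam else 0) := by
        intro i
        by_cases hi : i ∈ I'
        · rw [if_pos hi, if_pos hi, hlam i]; ring
        · rw [if_neg hi, if_neg hi, finrank_top, sub_zero, hdd]
      rw [Finset.sum_congr rfl fun i _ => hterm i, Finset.sum_sub_distrib, Finset.sum_const,
        Finset.card_univ, Finset.sum_ite_mem, Finset.univ_inter, Finset.sum_const]
      simp [nsmul_eq_mul]
    have hK'd : (finrank ℝ (Submodule.pi Set.univ (Sum.elim (fun v => if v ∈ I'.image (fun i => i.1.1) then 𝔥v v else (⊤ : Submodule ℝ 𝔤))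
        (Sum.elim (fun e => if e ∈ I'.image (fun i => i.1.2) then 𝔥e e else (⊤ : Submodule ℝ 𝔤))
          (fun i => if i ∈ I' then 𝔥i i else (⊤ : Submodule ℝ 𝔤))))) : ℤ)
        = (Fintype.card V * d - (I'.image fun i => i.1.1).card * k₁)
          + ((Fintype.card E * d - (I'.image fun i => i.1.2).card * k₂)
          + (Fintype.card {p : V × E // p.1 ∈ ed p.2} * d - I'.card * (k₁ + k₂ - lam))) := by
      rw [hK'n]
      push_cast
      erw [hKv, hKe, hKi]
    -- dimension of the target of R'
    have hT'dim : (finrank ℝ (∀ j : {i : {p : V × E // p.1 ∈ ed p.2} // i ∈ I'},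
          (𝔤 ⧸ 𝔥v j.1.1.1) × (𝔤 ⧸ 𝔥e j.1.1.2)) : ℤ) = I'.card * (k₁ + k₂) := by
      rw [Module.finrank_pi_fintype ℝ,
        aux_sum_const _ (k₁ + k₂) (fun j => by
          rw [Module.finrank_prod]; push_cast; rw [hq1, hq2]),
        Fintype.card_coe]
    -- put everything together
    have z4 : (finrank ℝ (LinearMap.ker R') : ℤ)
        + finrank ℝ (∀ j : {i : {p : V × E // p.1 ∈ ed p.2} // i ∈ I'},
          (𝔤 ⧸ 𝔥v j.1.1.1) × (𝔤 ⧸ 𝔥e j.1.1.2))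
        = finrank ℝ ((V ⊕ E ⊕ {p : V × E // p.1 ∈ ed p.2}) → 𝔤) := by exact_mod_cast h4
    have z5 : (finrank ℝ ↥(Δ ⊔ Submodule.pi Set.univ (Sum.elim (fun v => if v ∈ I'.image (fun i => i.1.1) then 𝔥v v else (⊤ : Submodule ℝ 𝔤))
        (Sum.elim (fun e => if e ∈ I'.image (fun i => i.1.2) then 𝔥e e else (⊤ : Submodule ℝ 𝔤))
          (fun i => if i ∈ I' then 𝔥i i else (⊤ : Submodule ℝ 𝔤))))) : ℤ)
        = finrank ℝ Δ + finrank ℝ (Submodule.pi Set.univ (Sum.elim (fun v => if v ∈ I'.image (fun i => i.1.1) then 𝔥v v else (⊤ : Submodule ℝ 𝔤))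
        (Sum.elim (fun e => if e ∈ I'.image (fun i => i.1.2) then 𝔥e e else (⊤ : Submodule ℝ 𝔤))
          (fun i => if i ∈ I' then 𝔥i i else (⊤ : Submodule ℝ 𝔤))))) := by exact_mod_cast hsup
    have z6 : (finrank ℝ ↥(Δ ⊔ Submodule.pi Set.univ (Sum.elim (fun v => if v ∈ I'.image (fun i => i.1.1) then 𝔥v v else (⊤ : Submodule ℝ 𝔤))
        (Sum.elim (fun e => if e ∈ I'.image (fun i => i.1.2) then 𝔥e e else (⊤ : Submodule ℝ 𝔤))
          (fun i => if i ∈ I' then 𝔥i i else (⊤ : Submodule ℝ 𝔤))))) : ℤ)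
        ≤ finrank ℝ (LinearMap.ker R') := by exact_mod_cast hle2
    have z7 : (finrank ℝ Δ : ℤ) = d := by rw [hdd]; exact_mod_cast hΔd
    linarith [z4, z5, z6, z7, hK'd, hT'dim, hFdim]
end

section
/- Let ρ be a graph-of-groups realisation of a finite hypergraph Γ=(V,E) in a group G. Let V₀ ⊆ V, let C₁ ⊆ V ∖ V₀ be such that every hyperedge e ∈ E with e ∩ C₁ ≠ ∅ satisfies e ⊆ C₁ ∪ V₀ (C₁ is a union of connected components of Γ after deleting V₀), and let σ ∈ ⋂_{v∈V₀} ρ(v). Define M = (σ_x)_{x∈V∪E∪I} by: σ_v = σ for v ∈ C₁; σ_e = σ for e ∈ E with e ∩ C₁ ≠ ∅; σ_x = identity for all other vertices and edges; and σ_i = σ_e for every incidence i=(v,e). Then M is a motion of ρ. Moreover, if there exist K₁ ⊆ C₁ and K₂ ⊆ V ∖ (V₀ ∪ C₁) with ⋂_{x ∈ V₀∪K₁} ρ(x) = {1} and ⋂_{x ∈ V₀∪K₂} ρ(x) = {1}, and σ ≠ 1, then M is not equivalent to any trivial motion. -/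
/-- A motion of a graph-of-groups realisation `(ρv, ρe)` of the hypergraph with
hyperedge vertex-sets `ed : E → Set V`: a family of group elements indexed by
vertices, hyperedges and incidences such that `σᵢ⁻¹σ_v ∈ ρ(v)` and `σᵢ⁻¹σ_e ∈ ρ(e)`
for every incidence `i = (v,e)`. -/
def IsMotion {V E G : Type*} [Group G] (ed : E → Set V)
    (ρv : V → Subgroup G) (ρe : E → Subgroup G)
    (σv : V → G) (σe : E → G) (σi : V → E → G) : Prop :=
  ∀ v e, v ∈ ed e → (σi v e)⁻¹ * σv v ∈ ρv v ∧ (σi v e)⁻¹ * σe e ∈ ρe e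

/-- If `V₀` disconnects the hypergraph and `C₁` is a union of
components of the complement, then the family which is `σ ∈ ⋂_{v ∈ V₀} ρ(v)` on `C₁`
and on the hyperedges meeting `C₁` (and the identity elsewhere, with `σᵢ = σ_e` on
incidences) is a motion; and it is not equivalent to a trivial motion provided `σ ≠ 1`
and there are `K₁ ⊆ C₁`, `K₂ ⊆ V ∖ (V₀ ∪ C₁)` with
`⋂_{x∈V₀∪K₁} ρ(x) = ⋂_{x∈V₀∪K₂} ρ(x) = {1}`. -/
theorem statement_8 {V E G : Type*} [Fintype V] [Fintype E] [Group G]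
    (ed : E → Set V) (ρv : V → Subgroup G) (ρe : E → Subgroup G)
    (V₀ C₁ : Set V) (hdisj : C₁ ∩ V₀ = ∅)
    (hcomp : ∀ e, (ed e ∩ C₁).Nonempty → ed e ⊆ C₁ ∪ V₀)
    (σ : G) (hσ : ∀ v ∈ V₀, σ ∈ ρv v)
    (σv : V → G) (σe : E → G)
    (hσv : ∀ v, (v ∈ C₁ → σv v = σ) ∧ (v ∉ C₁ → σv v = 1))
    (hσe : ∀ e, ((ed e ∩ C₁).Nonempty → σe e = σ) ∧ (¬ (ed e ∩ C₁).Nonempty → σe e = 1)) :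
    IsMotion ed ρv ρe σv σe (fun _ e => σe e) ∧
    ∀ K₁ K₂ : Set V, K₁ ⊆ C₁ → K₂ ⊆ (C₁ ∪ V₀)ᶜ →
      (⨅ v ∈ V₀ ∪ K₁, ρv v) = ⊥ → (⨅ v ∈ V₀ ∪ K₂, ρv v) = ⊥ → σ ≠ 1 →
      ¬ ∃ (g : G) (μv : V → G) (μe : E → G) (μi : V → E → G),
          IsMotion ed ρv ρe μv μe μi ∧
          (∀ v, μv v ∈ ρv v) ∧ (∀ e, μe e ∈ ρe e) ∧
          (∀ v e, v ∈ ed e → μi v e ∈ ρv v ⊓ ρe e) ∧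
          (∀ v, σv v = g * μv v) ∧ (∀ e, σe e = g * μe e) ∧
          (∀ v e, v ∈ ed e → σe e = g * μi v e) := by
  constructor
  · intro v e hv
    by_cases h : (ed e ∩ C₁).Nonempty
    · have he := (hσe e).1 h
      simp only [he]
      refine ⟨?_, by simpa using one_mem (ρe e)⟩
      rcases hcomp e h hv with hc | h0
      · simp only [(hσv v).1 hc]; simpa using one_mem (ρv v)
      · simp only [(hσv v).2 (fun hc => (Set.eq_empty_iff_forall_notMem.mp hdisj v) ⟨hc, h0⟩)]
        simpa using (ρv v).inv_mem (hσ v h0)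
    · simp only [(hσe e).2 h, (hσv v).2 (fun hc => h ⟨v, hv, hc⟩), inv_one, one_mul]
      exact ⟨one_mem _, one_mem _⟩
  · rintro K₁ K₂ hK₁ hK₂ hb₁ hb₂ hσne ⟨g, μv, μe, μi, _, hμv, _, _, hgv, _, _⟩
    have hginv : ∀ v, v ∉ C₁ → g⁻¹ ∈ ρv v := by
      intro v hvnC
      have h1 : g * μv v = 1 := by rw [← hgv v, (hσv v).2 hvnC]
      exact (inv_eq_of_mul_eq_one_right h1) ▸ hμv v
    have hV₀nC : ∀ v ∈ V₀, v ∉ C₁ :=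
      fun v hv hc => (Set.eq_empty_iff_forall_notMem.mp hdisj v) ⟨hc, hv⟩
    have hg1 : g = 1 := by
      have : g⁻¹ ∈ ⨅ v ∈ V₀ ∪ K₂, ρv v := by
        rw [Subgroup.mem_iInf]; intro v; rw [Subgroup.mem_iInf]; rintro (hv | hv)
        · exact hginv v (hV₀nC v hv)
        · exact hginv v (fun hc => hK₂ hv (Or.inl hc))
      rw [hb₂, Subgroup.mem_bot, inv_eq_one] at this
      exact this
    have hgσ : g = σ := by
      have : g⁻¹ * σ ∈ ⨅ v ∈ V₀ ∪ K₁, ρv v := by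
        rw [Subgroup.mem_iInf]; intro v; rw [Subgroup.mem_iInf]; rintro (hv | hv)
        · exact (ρv v).mul_mem (hginv v (hV₀nC v hv)) (hσ v hv)
        · have h1 : σ = g * μv v := by rw [← hgv v, (hσv v).1 (hK₁ hv)]
          have : g⁻¹ * σ = μv v := by rw [h1]; group
          exact this ▸ hμv v
      rw [hb₁, Subgroup.mem_bot, inv_mul_eq_one] at this
      exact this
    exact hσne (hgσ ▸ hg1)
end

section
/- Let x₁, …, xₙ ∈ ℝ^d be points whose affine span has dimension k. Then the linear subspace {(S, b) : S a skew-symmetric real d×d matrix, b ∈ ℝ^d, and S·xᵢ + b = 0 for all i = 1,…,n} of (skew-symmetric d×d matrices) × ℝ^d has dimension binom(d−k, 2). -/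
lemma card_fin_lt_pairs (m : ℕ) :
    Fintype.card {p : Fin m × Fin m // p.1 < p.2} = m.choose 2 := by
  have e : {p : Fin m × Fin m // p.1 < p.2} ≃ Σ j : Fin m, Fin j.val :=
    { toFun := fun p => ⟨p.1.2, ⟨p.1.1.val, p.2⟩⟩
      invFun := fun q => ⟨(⟨q.2.val, lt_trans q.2.isLt q.1.isLt⟩, q.1), q.2.isLt⟩
      left_inv := fun p => by ext <;> simp
      right_inv := fun q => by ext <;> simp }
  rw [Fintype.card_congr e]
  simp only [Fintype.card_sigma, Fintype.card_fin]
  rw [Fin.sum_univ_eq_sum_range (fun i => i) m, Nat.choose_two_right]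
  have := Finset.sum_range_id_mul_two m
  omega

lemma card_idx (d k : ℕ) (hkd : k ≤ d) :
    Fintype.card {p : Fin d × Fin d // k ≤ p.1.val ∧ p.1.val < p.2.val} = (d - k).choose 2 := by
  have e : {p : Fin d × Fin d // k ≤ p.1.val ∧ p.1.val < p.2.val}
      ≃ {q : Fin (d - k) × Fin (d - k) // q.1 < q.2} :=
    { toFun := fun p => ⟨(⟨p.1.1.val - k, by omega⟩, ⟨p.1.2.val - k, by
        have := p.1.2.isLt; omega⟩), by
        obtain ⟨h1, h2⟩ := p.2
        simp only [Fin.mk_lt_mk]; omega⟩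
      invFun := fun q => ⟨(⟨q.1.1.val + k, by have := q.1.1.isLt; omega⟩,
        ⟨q.1.2.val + k, by have := q.1.2.isLt; omega⟩), by
        have := q.2; simp only [Fin.mk_lt_mk] at this ⊢
        constructor
        · omega
        · exact Nat.add_lt_add_right (by exact_mod_cast this) k⟩
      left_inv := fun p => by
        obtain ⟨⟨a, b⟩, h1, h2⟩ := p
        simp only at h1 h2
        refine Subtype.ext (Prod.ext (Fin.ext ?_) (Fin.ext ?_)) <;> simp only <;> omega
      right_inv := fun q => by
        obtain ⟨⟨a, b⟩, h⟩ := q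
        refine Subtype.ext (Prod.ext (Fin.ext ?_) (Fin.ext ?_)) <;> simp only <;> omega }
  rw [Fintype.card_congr e, card_fin_lt_pairs]

def skewKill (d k : ℕ) : Submodule ℝ (Matrix (Fin d) (Fin d) ℝ) where
  carrier := {S | S.transpose = -S ∧ ∀ i j : Fin d, j.val < k → S i j = 0}
  add_mem' := by
    rintro a b ⟨ha1, ha2⟩ ⟨hb1, hb2⟩
    refine ⟨by rw [Matrix.transpose_add, ha1, hb1]; abel, fun i j hj => ?_⟩
    simp [Matrix.add_apply, ha2 i j hj, hb2 i j hj]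
  zero_mem' := by simp
  smul_mem' := by
    rintro c a ⟨ha1, ha2⟩
    refine ⟨by rw [Matrix.transpose_smul, ha1, smul_neg], fun i j hj => ?_⟩
    simp [Matrix.smul_apply, ha2 i j hj]

lemma mem_skewKill {d k : ℕ} {S : Matrix (Fin d) (Fin d) ℝ} :
    S ∈ skewKill d k ↔ S.transpose = -S ∧ ∀ i j : Fin d, j.val < k → S i j = 0 :=
  Iff.rfl

noncomputable def skewKillEquiv (d k : ℕ) :
    ↥(skewKill d k) ≃ₗ[ℝ] ({p : Fin d × Fin d // k ≤ p.1.val ∧ p.1.val < p.2.val} → ℝ) where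
  toFun S := fun p => S.1 p.1.1 p.1.2
  map_add' _ _ := rfl
  map_smul' _ _ := rfl
  invFun f := ⟨Matrix.of fun i j =>
      if h : k ≤ i.val ∧ i.val < j.val then f ⟨(i, j), h⟩
      else if h' : k ≤ j.val ∧ j.val < i.val then -f ⟨(j, i), h'⟩ else 0, by
    constructor
    · ext i j
      simp only [Matrix.transpose_apply, Matrix.neg_apply, Matrix.of_apply]
      by_cases h : k ≤ i.val ∧ i.val < j.val
      · rw [dif_neg (by omega), dif_pos h, dif_pos h]
      · by_cases h' : k ≤ j.val ∧ j.val < i.val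
        · rw [dif_pos h', dif_neg h, dif_pos h', neg_neg]
        · rw [dif_neg h', dif_neg (by omega), dif_neg h, dif_neg h', neg_zero]
    · intro i j hj
      simp only [Matrix.of_apply]
      rw [dif_neg (by omega), dif_neg (by omega)]⟩
  left_inv := by
    rintro ⟨S, hS1, hS2⟩
    apply Subtype.ext
    ext i j
    simp only [Matrix.of_apply]
    have hskew : S j i = -S i j := by
      have := congrFun (congrFun hS1 i) j
      simpa [Matrix.transpose_apply, Matrix.neg_apply] using this
    by_cases h : k ≤ i.val ∧ i.val < j.val
    · rw [dif_pos h]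
    · by_cases h' : k ≤ j.val ∧ j.val < i.val
      · rw [dif_neg h, dif_pos h']
        linarith [hskew]
      · rw [dif_neg h, dif_neg h']
        by_cases hj : j.val < k
        · rw [hS2 i j hj]
        · by_cases hi : i.val < k
          · rw [hS2 j i hi] at hskew
            linarith [hskew]
          · have : i = j := Fin.ext (by omega)
            subst this
            linarith [hskew]
  right_inv := by
    intro f
    funext p
    obtain ⟨⟨i, j⟩, h⟩ := p
    simp only [Matrix.of_apply]
    rw [dif_pos h]

open Module

def skewAnn (d : ℕ) (V : Submodule ℝ (Fin d → ℝ)) : Submodule ℝ (Matrix (Fin d) (Fin d) ℝ) where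
  carrier := {S | S.transpose = -S ∧ ∀ v ∈ V, S.mulVec v = 0}
  add_mem' := by
    rintro a b ⟨ha1, ha2⟩ ⟨hb1, hb2⟩
    refine ⟨by rw [Matrix.transpose_add, ha1, hb1]; abel, fun v hv => ?_⟩
    rw [Matrix.add_mulVec, ha2 v hv, hb2 v hv, add_zero]
  zero_mem' := by
    refine ⟨by simp, fun v hv => ?_⟩
    simp [Matrix.zero_mulVec]
  smul_mem' := by
    rintro c a ⟨ha1, ha2⟩
    refine ⟨by rw [Matrix.transpose_smul, ha1, smul_neg], fun v hv => ?_⟩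
    rw [Matrix.smul_mulVec, ha2 v hv, smul_zero]

lemma mem_skewAnn {d : ℕ} {V : Submodule ℝ (Fin d → ℝ)} {S : Matrix (Fin d) (Fin d) ℝ} :
    S ∈ skewAnn d V ↔ S.transpose = -S ∧ ∀ v ∈ V, S.mulVec v = 0 := Iff.rfl

lemma finrank_skewKill (d k : ℕ) (hkd : k ≤ d) :
    Module.finrank ℝ ↥(skewKill d k) = (d - k).choose 2 := by
  rw [(skewKillEquiv d k).finrank_eq, Module.finrank_fintype_fun_eq_card, card_idx d k hkd]

lemma finrank_skewAnn (d k : ℕ) (V : Submodule ℝ (Fin d → ℝ))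
    (hV : Module.finrank ℝ ↥V = k) :
    Module.finrank ℝ ↥(skewAnn d V) = (d - k).choose 2 := by
  have hkd : k ≤ d := by
    rw [← hV]
    have := Submodule.finrank_le V
    rwa [Module.finrank_fintype_fun_eq_card, Fintype.card_fin] at this
  set E := EuclideanSpace ℝ (Fin d)
  let e : E ≃ₗ[ℝ] (Fin d → ℝ) := WithLp.linearEquiv 2 ℝ (Fin d → ℝ)
  let V' : Submodule ℝ E := Submodule.comap e.toLinearMap V
  have hV' : Module.finrank ℝ ↥V' = k := by
    rw [show V' = Submodule.map e.symm.toLinearMap V from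
      Submodule.comap_equiv_eq_map_symm e V]
    rw [LinearEquiv.finrank_map_eq e.symm V, hV]
  let ob : OrthonormalBasis (Fin k) ℝ V' := (stdOrthonormalBasis ℝ V').reindex (finCongr hV')
  let v : Fin d → E := fun j => if h : j.val < k then (ob ⟨j.val, h⟩ : E) else 0
  set s : Set (Fin d) := {j | j.val < k} with hs
  have hv : Orthonormal ℝ (s.restrict v) := by
    rw [orthonormal_iff_ite]
    intro i j
    have hi : (i : Fin d).val < k := i.2
    have hj : (j : Fin d).val < k := j.2
    show inner ℝ (v i) (v j) = _
    simp only [v, dif_pos hi, dif_pos hj]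
    rw [← Submodule.coe_inner, orthonormal_iff_ite.mp ob.orthonormal]
    by_cases h : i = j
    · subst h; simp
    · rw [if_neg h, if_neg]
      intro hc
      rw [Fin.mk.injEq] at hc
      exact h (Subtype.ext (Fin.ext hc))
  obtain ⟨B, hB⟩ := hv.exists_orthonormalBasis_extension_of_card_eq
    (by rw [Fintype.card_fin]; exact finrank_euclideanSpace_fin) (v := v)
  let c : Fin d → (Fin d → ℝ) := fun j => e (B j)
  have hcV : ∀ j : Fin d, j.val < k → c j ∈ V := by
    intro j hj
    have h1 : B j = v j := hB j hj
    have h2 : B j ∈ V' := by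
      rw [h1]; simp only [v, dif_pos hj]; exact (ob ⟨j.val, hj⟩).2
    exact h2
  -- span of the first k basis vectors is V
  let w : s → E := fun j => B j.1
  have hw : Orthonormal ℝ w := B.orthonormal.comp _ Subtype.coe_injective
  have hcards : Fintype.card s = k := by
    have e2 : s ≃ Fin k :=
      { toFun := fun j => ⟨j.1.val, j.2⟩
        invFun := fun i => ⟨⟨i.val, lt_of_lt_of_le i.isLt hkd⟩, i.isLt⟩
        left_inv := fun j => Subtype.ext (Fin.ext rfl)
        right_inv := fun i => Fin.ext rfl }
    rw [Fintype.card_congr e2, Fintype.card_fin]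
  have hspan : Submodule.span ℝ (Set.range w) = V' := by
    apply Submodule.eq_of_le_of_finrank_le
    · rw [Submodule.span_le]
      rintro _ ⟨j, rfl⟩
      have h1 : B j.1 = v j.1 := hB j.1 j.2
      have hj : (j : Fin d).val < k := j.2
      show B j.1 ∈ V'
      rw [h1]; simp only [v, dif_pos hj]; exact (ob ⟨j.1.val, hj⟩).2
    · rw [hV', finrank_span_eq_card hw.linearIndependent, hcards]
  have hspanV : Submodule.span ℝ (Set.range (⇑e ∘ w)) = V := by
    have h1 := congrArg (Submodule.map (e.toLinearMap)) hspan
    rw [Submodule.map_span, ← Set.range_comp] at h1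
    have h2 : Submodule.map e.toLinearMap V' = V :=
      Submodule.map_comap_eq_of_surjective e.surjective V
    exact h1.trans h2
  -- the orthogonal matrix Q
  let Q : Matrix (Fin d) (Fin d) ℝ := Matrix.of fun r j => c j r
  have hQ : Q.transpose * Q = 1 := by
    ext i j
    have h1 : (inner ℝ (B i) (B j) : ℝ) = if i = j then 1 else 0 :=
      orthonormal_iff_ite.mp B.orthonormal i j
    rw [EuclideanSpace.inner_eq_star_dotProduct] at h1
    have h2 : dotProduct (star (c i)) (c j) = if i = j then 1 else 0 := by
      rw [dotProduct_comm]; exact h1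
    rw [Matrix.mul_apply, Matrix.one_apply, ← h2]
    simp [dotProduct, Matrix.transpose_apply, Q, Pi.star_apply]
  have hQ' : Q * Q.transpose = 1 := mul_eq_one_comm.mp hQ
  have hQcol : ∀ j : Fin d, Q.mulVec (Pi.single j 1) = c j := by
    intro j
    funext r
    rw [Matrix.mulVec_single]
    simp [Q]
  -- the conjugation equivalence
  let conj : Matrix (Fin d) (Fin d) ℝ ≃ₗ[ℝ] Matrix (Fin d) (Fin d) ℝ :=
    { toFun := fun S => Q * S * Q.transpose
      map_add' := fun a b => by rw [Matrix.mul_add, Matrix.add_mul]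
      map_smul' := fun r a => by simp [Matrix.mul_smul, Matrix.smul_mul]
      invFun := fun S => Q.transpose * S * Q
      left_inv := fun S => by
        dsimp only
        rw [Matrix.mul_assoc Q S, ← Matrix.mul_assoc, ← Matrix.mul_assoc, hQ,
          Matrix.one_mul, Matrix.mul_assoc, hQ, Matrix.mul_one]
      right_inv := fun S => by
        dsimp only
        rw [Matrix.mul_assoc Q.transpose S, ← Matrix.mul_assoc, ← Matrix.mul_assoc, hQ',
          Matrix.one_mul, Matrix.mul_assoc, hQ', Matrix.mul_one] }
  -- key membership characterization
  have hkey : ∀ S : Matrix (Fin d) (Fin d) ℝ,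
      (∀ u ∈ V, S.mulVec u = 0) ↔ ∀ j : Fin d, j.val < k → S.mulVec (c j) = 0 := by
    intro S
    constructor
    · intro h j hj
      exact h (c j) (hcV j hj)
    · intro h u hu
      rw [← hspanV] at hu
      have hle : Submodule.span ℝ (Set.range (⇑e ∘ w)) ≤ LinearMap.ker S.mulVecLin := by
        rw [Submodule.span_le]
        rintro _ ⟨j, rfl⟩
        have : (⇑e ∘ w) j = c j.1 := rfl
        rw [SetLike.mem_coe, LinearMap.mem_ker, Matrix.mulVecLin_apply, this]
        exact h j.1 j.2
      have := hle hu
      rwa [LinearMap.mem_ker, Matrix.mulVecLin_apply] at this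
  have hmap : Submodule.map (conj : Matrix (Fin d) (Fin d) ℝ →ₗ[ℝ]
      Matrix (Fin d) (Fin d) ℝ) (skewKill d k) = skewAnn d V := by
    ext T
    rw [Submodule.mem_map]
    constructor
    · rintro ⟨S, ⟨hS1, hS2⟩, rfl⟩
      refine ⟨?_, ?_⟩
      · show (Q * S * Q.transpose).transpose = -(Q * S * Q.transpose)
        simp only [Matrix.transpose_mul, Matrix.transpose_transpose, hS1,
          Matrix.neg_mul, Matrix.mul_neg, Matrix.mul_assoc]
      · show ∀ u ∈ V, (Q * S * Q.transpose).mulVec u = 0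
        rw [hkey]
        intro j hj
        have hcolS : S.mulVec (Pi.single j 1) = 0 := by
          funext r
          rw [Matrix.mulVec_single]
          simp [hS2 r j hj]
        rw [← hQcol j, Matrix.mulVec_mulVec, Matrix.mul_assoc (Q * S) Q.transpose Q, hQ,
          Matrix.mul_one, ← Matrix.mulVec_mulVec, hcolS, Matrix.mulVec_zero]
    · intro hT
      obtain ⟨hT1, hT2⟩ := (mem_skewAnn).mp hT
      refine ⟨Q.transpose * T * Q, ⟨?_, ?_⟩, ?_⟩
      · simp only [Matrix.transpose_mul, Matrix.transpose_transpose, hT1,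
          Matrix.neg_mul, Matrix.mul_neg, Matrix.mul_assoc]
      · intro i j hj
        have h0 : (Q.transpose * T * Q).mulVec (Pi.single j 1) = 0 := by
          rw [← Matrix.mulVec_mulVec, hQcol j, ← Matrix.mulVec_mulVec,
            hT2 (c j) (hcV j hj), Matrix.mulVec_zero]
        have := congrFun h0 i
        rw [Matrix.mulVec_single] at this
        simpa using this
      · show Q * (Q.transpose * T * Q) * Q.transpose = T
        rw [Matrix.mul_assoc Q.transpose T, ← Matrix.mul_assoc, ← Matrix.mul_assoc, hQ',
          Matrix.one_mul, Matrix.mul_assoc, hQ', Matrix.mul_one]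
  rw [← hmap, LinearEquiv.finrank_map_eq conj (skewKill d k), finrank_skewKill d k hkd]

/-- If `x₁, …, xₙ ∈ ℝ^d` span a `k`-dimensional affine subspace, then
the space `{(S,b) : S skew-symmetric, Sxᵢ + b = 0 for all i}` (the Lie algebra of the
pointwise stabiliser of the points inside the Euclidean group `E(d)`) has dimension
`binom(d-k, 2)`. -/
theorem statement_12 (d n k : ℕ) (hn : 1 ≤ n) (x : Fin n → (Fin d → ℝ))
    (hk : Module.finrank ℝ ↥(affineSpan ℝ (Set.range x)).direction = k)
    (W : Submodule ℝ (Matrix (Fin d) (Fin d) ℝ × (Fin d → ℝ)))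
    (hW : ∀ p : Matrix (Fin d) (Fin d) ℝ × (Fin d → ℝ),
      p ∈ W ↔ p.1.transpose = -p.1 ∧ ∀ i, p.1.mulVec (x i) + p.2 = 0) :
    Module.finrank ℝ ↥W = (d - k).choose 2 := by
  set V := (affineSpan ℝ (Set.range x)).direction with hVdef
  set i0 : Fin n := ⟨0, hn⟩ with hi0
  have hmemW : ∀ p : Matrix (Fin d) (Fin d) ℝ × (Fin d → ℝ),
      p ∈ W ↔ p.1 ∈ skewAnn d V ∧ p.2 = -p.1.mulVec (x i0) := by
    intro p
    rw [hW]
    constructor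
    · rintro ⟨h1, h2⟩
      have hb : p.2 = -p.1.mulVec (x i0) := by
        have h := h2 i0
        rwa [add_comm, add_eq_zero_iff_eq_neg] at h
      have hxall : ∀ i, p.1.mulVec (x i) = -p.2 := by
        intro i
        have h := h2 i
        rwa [add_eq_zero_iff_eq_neg] at h
      refine ⟨⟨h1, ?_⟩, hb⟩
      have hle : Submodule.span ℝ (Set.range x -ᵥ Set.range x)
          ≤ LinearMap.ker p.1.mulVecLin := by
        rw [Submodule.span_le]
        rintro u ⟨a, ⟨i, rfl⟩, b, ⟨j, rfl⟩, rfl⟩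
        rw [SetLike.mem_coe, LinearMap.mem_ker, Matrix.mulVecLin_apply]
        show p.1.mulVec (x i - x j) = 0
        rw [Matrix.mulVec_sub, hxall i, hxall j, sub_self]
      intro v hv
      have hv' : v ∈ Submodule.span ℝ (Set.range x -ᵥ Set.range x) := by
        rw [← vectorSpan_def, ← direction_affineSpan]
        exact hVdef ▸ hv
      have := hle hv'
      rwa [LinearMap.mem_ker, Matrix.mulVecLin_apply] at this
    · rintro ⟨⟨h1, h2⟩, hb⟩
      refine ⟨h1, fun i => ?_⟩
      have hvs : x i - x i0 ∈ V := by
        rw [hVdef, direction_affineSpan]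
        exact vsub_mem_vectorSpan ℝ (Set.mem_range_self i) (Set.mem_range_self i0)
      have h := h2 _ hvs
      rw [Matrix.mulVec_sub] at h
      rw [hb, ← sub_eq_add_neg]
      exact h
  let eqv : ↥W ≃ₗ[ℝ] ↥(skewAnn d V) :=
    { toFun := fun p => ⟨p.1.1, ((hmemW p.1).mp p.2).1⟩
      map_add' := fun _ _ => rfl
      map_smul' := fun _ _ => rfl
      invFun := fun S => ⟨(S.1, -S.1.mulVec (x i0)), (hmemW _).mpr ⟨S.2, rfl⟩⟩
      left_inv := fun p => Subtype.ext (Prod.ext rfl ((hmemW p.1).mp p.2).2.symm)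
      right_inv := fun S => rfl }
  rw [eqv.finrank_eq, finrank_skewAnn d k V hk]
end

section
/- Let d ≥ 2, let Γ = (V,E) be a finite simple graph, and let p₁, p₂ : V → ℝ^d. Let G = E(d) be the group of surjective isometries of ℝ^d, and for a map p : V → ℝ^d define the graph-of-groups realisation ρ_p in G by ρ_p(v) = Stab_G(p(v)) for v ∈ V and ρ_p(e) = Stab_G(p(v)) ∩ Stab_G(p(w)) for an edge e = {v,w}. Then the frameworks (Γ,p₁) and (Γ,p₂) are equivalent, i.e. ‖p₁(v) − p₁(w)‖ = ‖p₂(v) − p₂(w)‖ for every edge {v,w} ∈ E, if and only if there exists a motion M of ρ_{p₁} with ρ_{p₁}^M = ρ_{p₂}. -/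
noncomputable abbrev Euc (d : ℕ) := EuclideanSpace ℝ (Fin d)

/-- The Euclidean group `E(d)` of surjective self-isometries of `ℝ^d`. -/
noncomputable abbrev EucGrp (d : ℕ) := Euc d ≃ᵢ Euc d

/-- The stabiliser of a point `x ∈ ℝ^d` in the Euclidean group `E(d)`. -/
noncomputable def Stab {d : ℕ} (x : Euc d) : Subgroup (EucGrp d) where
  carrier := {g | g x = x}
  one_mem' := rfl
  mul_mem' := by
    intro a b ha hb
    simp only [Set.mem_setOf_eq] at *
    show a (b x) = x
    rw [hb, ha]
  inv_mem' := by
    intro a ha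
    simp only [Set.mem_setOf_eq] at *
    show a.symm x = x
    rw [← ha, IsometryEquiv.symm_apply_apply, ha]

/-- Conjugate of a subgroup: `H ↦ gHg⁻¹`. -/
def conjSub {G : Type*} [Group G] (g : G) (H : Subgroup G) : Subgroup G :=
  Subgroup.map (MulAut.conj g).toMonoidHom H

lemma mem_Stab_iff {d : ℕ} {x : Euc d} {g : EucGrp d} : g ∈ Stab x ↔ g x = x := Iff.rfl

/-- There is an isometry moving any pair of points to any pair at the same distance. -/
lemma exists_isom_pair {d : ℕ} (a b a' b' : Euc d) (h : ‖a - b‖ = ‖a' - b'‖) :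
    ∃ g : EucGrp d, g a = a' ∧ g b = b' := by
  have hn : ‖b - a‖ = ‖b' - a'‖ := by rw [norm_sub_rev, norm_sub_rev b' a', h]
  let R := Submodule.reflection (ℝ ∙ ((b - a) - (b' - a')))ᗮ
  have hR : R (b - a) = b' - a' := Submodule.reflection_sub hn
  refine ⟨(IsometryEquiv.subRight a).trans (R.toIsometryEquiv.trans (IsometryEquiv.addLeft a')),
    ?_, ?_⟩
  · simp [R, IsometryEquiv.trans_apply]
  · simp only [IsometryEquiv.trans_apply, IsometryEquiv.subRight_apply,
      LinearIsometryEquiv.coe_toIsometryEquiv, IsometryEquiv.addLeft_apply, hR]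
    abel

/-- Conjugation carries stabilisers to stabilisers. -/
lemma conjSub_Stab {d : ℕ} (g : EucGrp d) (x : Euc d) :
    conjSub g (Stab x) = Stab (g x) := by
  ext h
  simp only [conjSub, Subgroup.mem_map, MulEquiv.coe_toMonoidHom, MulAut.conj_apply,
    mem_Stab_iff]
  constructor
  · rintro ⟨k, hk, rfl⟩
    show g (k (g.symm (g x))) = g x
    rw [g.symm_apply_apply, hk]
  · intro hh
    refine ⟨g⁻¹ * h * g, ?_, by group⟩
    show g.symm (h (g x)) = x
    rw [hh, g.symm_apply_apply]

lemma Stab_injective {d : ℕ} {x y : Euc d} (h : Stab x = Stab y) : x = y := by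
  -- point reflection about x lies in Stab x
  set r : EucGrp d := (IsometryEquiv.neg (Euc d)).trans (IsometryEquiv.addLeft (x + x)) with hr
  have hrx : ∀ z, r z = x + x - z := fun z => by
    simp [hr, IsometryEquiv.trans_apply, sub_eq_add_neg]
  have h1 : r ∈ Stab x := by rw [mem_Stab_iff, hrx]; abel
  rw [h, mem_Stab_iff, hrx] at h1
  have h2 : (2 : ℝ) • x = (2 : ℝ) • y := by
    rw [two_smul, two_smul]
    linear_combination (norm := module) h1
  exact smul_right_injective _ (by norm_num : (2:ℝ) ≠ 0) h2

/-- Two `d`-dimensional bar-joint frameworks `(Γ,p₁)` and `(Γ,p₂)`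
(`d ≥ 2`) are equivalent (`‖p₁ v - p₁ w‖ = ‖p₂ v - p₂ w‖` on every edge) iff there is a
motion `M` of the associated graph-of-groups realisation `ρ_{p₁}` in `E(d)` (given by
`ρ_p(v) = Stab(p v)` and `ρ_p({v,w}) = Stab(p v) ⊓ Stab(p w)`) with `ρ_{p₁}^M = ρ_{p₂}`. -/
theorem statement_14 (d : ℕ) (hd : 2 ≤ d) {V : Type*} [Fintype V]
    (Γ : SimpleGraph V) (p₁ p₂ : V → Euc d) :
    (∀ v w, Γ.Adj v w → ‖p₁ v - p₁ w‖ = ‖p₂ v - p₂ w‖) ↔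
      ∃ (σv : V → EucGrp d) (σe : Sym2 V → EucGrp d) (σi : V → Sym2 V → EucGrp d),
        (∀ v w, Γ.Adj v w →
          (σi v s(v, w))⁻¹ * σv v ∈ Stab (p₁ v) ∧
          (σi v s(v, w))⁻¹ * σe s(v, w) ∈ Stab (p₁ v) ⊓ Stab (p₁ w)) ∧
        (∀ v, conjSub (σv v) (Stab (p₁ v)) = Stab (p₂ v)) ∧
        (∀ v w, Γ.Adj v w →
          conjSub (σe s(v, w)) (Stab (p₁ v) ⊓ Stab (p₁ w)) =
            Stab (p₂ v) ⊓ Stab (p₂ w)) := by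
  constructor
  · -- forward
    intro hEq
    -- choose an isometry per vertex
    have hv : ∀ v, ∃ g : EucGrp d, g (p₁ v) = p₂ v := fun v => by
      obtain ⟨g, hg, -⟩ := exists_isom_pair (p₁ v) (p₁ v) (p₂ v) (p₂ v) (by simp)
      exact ⟨g, hg⟩
    choose σv hσv using hv
    -- choose an isometry per edge
    have he : ∀ e : Sym2 V, ∃ g : EucGrp d,
        ∀ v w, e = s(v, w) → Γ.Adj v w → g (p₁ v) = p₂ v ∧ g (p₁ w) = p₂ w := by
      intro e
      by_cases hrep : ∃ v w, e = s(v, w) ∧ Γ.Adj v w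
      · obtain ⟨v₀, w₀, he₀, hadj₀⟩ := hrep
        obtain ⟨g, hg1, hg2⟩ :=
          exists_isom_pair (p₁ v₀) (p₁ w₀) (p₂ v₀) (p₂ w₀) (hEq v₀ w₀ hadj₀)
        refine ⟨g, ?_⟩
        intro v w hvw _
        rw [he₀, Sym2.eq_iff] at hvw
        rcases hvw with ⟨rfl, rfl⟩ | ⟨rfl, rfl⟩
        · exact ⟨hg1, hg2⟩
        · exact ⟨hg2, hg1⟩
      · exact ⟨1, fun v w hvw hadj => absurd ⟨v, w, hvw, hadj⟩ hrep⟩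
    choose σe hσe using he
    refine ⟨σv, σe, fun _ e => σe e, ?_, ?_, ?_⟩
    · intro v w hadj
      obtain ⟨h1, h2⟩ := hσe s(v, w) v w rfl hadj
      constructor
      · rw [mem_Stab_iff]
        show (σe s(v, w)).symm (σv v (p₁ v)) = p₁ v
        rw [hσv, ← h1, IsometryEquiv.symm_apply_apply]
      · rw [inv_mul_cancel]
        exact Subgroup.one_mem _
    · intro v
      rw [conjSub_Stab, hσv]
    · intro v w hadj
      obtain ⟨h1, h2⟩ := hσe s(v, w) v w rfl hadj
      have hinj : Function.Injective (MulAut.conj (σe s(v, w))).toMonoidHom :=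
        (MulAut.conj (σe s(v, w))).injective
      rw [conjSub, Subgroup.map_inf _ _ _ hinj]
      show conjSub _ _ ⊓ conjSub _ _ = _
      rw [conjSub_Stab, conjSub_Stab, h1, h2]
  · -- backward
    rintro ⟨σv, σe, σi, hmot, hcv, -⟩
    intro v w hadj
    have hv1 : σv v (p₁ v) = p₂ v := by
      have := hcv v
      rw [conjSub_Stab] at this
      exact Stab_injective this
    have hw1 : σv w (p₁ w) = p₂ w := by
      have := hcv w
      rw [conjSub_Stab] at this
      exact Stab_injective this
    obtain ⟨hiv, hie⟩ := hmot v w hadj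
    obtain ⟨hiw, hie'⟩ := hmot w v hadj.symm
    have hswap : s(w, v) = s(v, w) := Sym2.eq_swap
    rw [hswap] at hiw hie'
    -- σe s(v,w) (p₁ v) = σi v s(v,w) (p₁ v) = σv v (p₁ v) = p₂ v
    have key : ∀ (u : V) (σ : EucGrp d), (σ⁻¹ * σv u ∈ Stab (p₁ u)) →
        ∀ (τ : EucGrp d), (σ⁻¹ * τ ∈ Stab (p₁ u)) → τ (p₁ u) = σv u (p₁ u) := by
      intro u σ hσ τ hτ
      rw [mem_Stab_iff] at hσ hτ
      have hσ' := congrArg σ (show σ.symm (σv u (p₁ u)) = p₁ u from hσ)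
      rw [IsometryEquiv.apply_symm_apply] at hσ'
      have hτ' := congrArg σ (show σ.symm (τ (p₁ u)) = p₁ u from hτ)
      rw [IsometryEquiv.apply_symm_apply] at hτ'
      rw [hτ', hσ']
    have hev : σe s(v, w) (p₁ v) = p₂ v := by
      rw [key v (σi v s(v, w)) hiv (σe s(v, w)) hie.1, hv1]
    have hew : σe s(v, w) (p₁ w) = p₂ w := by
      rw [key w (σi w s(v, w)) hiw (σe s(v, w)) hie'.1, hw1]
    calc ‖p₁ v - p₁ w‖ = dist (p₁ v) (p₁ w) := (dist_eq_norm _ _).symm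
      _ = dist (σe s(v, w) (p₁ v)) (σe s(v, w) (p₁ w)) := ((σe s(v, w)).dist_eq _ _).symm
      _ = dist (p₂ v) (p₂ w) := by rw [hev, hew]
      _ = ‖p₂ v - p₂ w‖ := dist_eq_norm _ _
end

section
/- Let Γ = (V,E) be a finite simple graph and let n ≥ 3. For a proper n-colouring c : V → {1,…,n} (meaning c(v) ≠ c(w) for every edge {v,w}), define the graph-of-groups realisation ρ_c of Γ in the symmetric group Sₙ by ρ_c(v) = Stab_{Sₙ}(c(v)) and ρ_c(e) = Stab_{Sₙ}(c(v)) ∩ Stab_{Sₙ}(c(w)) for e = {v,w}. Then: (i) for every motion M of ρ_c there is a unique proper n-colouring c' of Γ with ρ_c^M = ρ_{c'}; and (ii) for every pair of proper n-colourings c, c' of Γ there exists a motion M of ρ_c with ρ_c^M = ρ_{c'}. -/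
def stabCol (n : ℕ) (i : Fin n) : Subgroup (Equiv.Perm (Fin n)) :=
  MulAction.stabilizer (Equiv.Perm (Fin n)) i

lemma mem_stabCol {n : ℕ} {i : Fin n} {x : Equiv.Perm (Fin n)} :
    x ∈ stabCol n i ↔ x i = i := by
  simp [stabCol, MulAction.mem_stabilizer_iff, Equiv.Perm.smul_def]

lemma conjSub_stabCol {n : ℕ} (g : Equiv.Perm (Fin n)) (i : Fin n) :
    conjSub g (stabCol n i) = stabCol n (g i) := by
  unfold conjSub stabCol
  rw [← MulAction.stabilizer_smul_eq_stabilizer_map_conj]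
  rfl

lemma mem_conjSub {G : Type*} [Group G] {g x : G} {H : Subgroup G} :
    x ∈ conjSub g H ↔ g⁻¹ * x * g ∈ H := by
  simp only [conjSub, Subgroup.mem_map, MulEquiv.coe_toMonoidHom, MulAut.conj_apply]
  constructor
  · rintro ⟨y, hy, rfl⟩; simpa [mul_assoc] using hy
  · intro h; exact ⟨_, h, by group⟩

lemma conjSub_inf {G : Type*} [Group G] (g : G) (H K : Subgroup G) :
    conjSub g (H ⊓ K) = conjSub g H ⊓ conjSub g K := by
  ext x; simp [mem_conjSub, Subgroup.mem_inf]

lemma stabCol_inj {n : ℕ} (hn : 3 ≤ n) {i j : Fin n}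
    (h : stabCol n i = stabCol n j) : i = j := by
  by_contra hij
  have hcompl : (({i, j} : Finset (Fin n))ᶜ).Nonempty := by
    rw [← Finset.card_pos, Finset.card_compl]
    have : ({i, j} : Finset (Fin n)).card ≤ 2 := Finset.card_insert_le _ _ |>.trans (by simp)
    simp only [Fintype.card_fin]; omega
  obtain ⟨k, hk⟩ := hcompl
  simp only [Finset.mem_compl, Finset.mem_insert, Finset.mem_singleton, not_or] at hk
  have h1 : Equiv.swap j k ∈ stabCol n i := by
    rw [mem_stabCol, Equiv.swap_apply_of_ne_of_ne hij (fun h => hk.1 h.symm)]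
  rw [h, mem_stabCol, Equiv.swap_apply_left] at h1
  exact hk.2 h1

lemma exists_perm_two {n : ℕ} {a b a' b' : Fin n} (hab : a ≠ b) (h' : a' ≠ b') :
    ∃ τ : Equiv.Perm (Fin n), τ a = a' ∧ τ b = b' := by
  refine ⟨Equiv.swap (Equiv.swap a a' b) b' * Equiv.swap a a', ?_, ?_⟩
  · have h1 : Equiv.swap a a' b ≠ a' := by
      intro h
      exact hab ((Equiv.swap a a').injective (h.trans (Equiv.swap_apply_left a a').symm)).symm
    simp only [Equiv.Perm.mul_apply, Equiv.swap_apply_left]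
    exact Equiv.swap_apply_of_ne_of_ne (Ne.symm h1) h'
  · simp only [Equiv.Perm.mul_apply, Equiv.swap_apply_left]

/-- For a finite simple graph `Γ`, `n ≥ 3`, and a proper `n`-colouring
`c`, consider the graph-of-groups realisation `ρ_c` of `Γ` in `Sₙ` given by
`ρ_c(v) = Stab(c v)` and `ρ_c({v,w}) = Stab(c v) ⊓ Stab(c w)`.  Then:
(i) for every motion `M` of `ρ_c` there is a unique proper `n`-colouring `c'` of `Γ`
with `ρ_c^M = ρ_{c'}`; and (ii) for every proper `n`-colouring `c'` of `Γ` there is a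
motion `M` of `ρ_c` with `ρ_c^M = ρ_{c'}`. -/
theorem statement_17 (n : ℕ) (hn : 3 ≤ n) {V : Type*} [Fintype V]
    (Γ : SimpleGraph V) (c : V → Fin n)
    (hc : ∀ v w, Γ.Adj v w → c v ≠ c w) :
    -- (i)
    (∀ (σv : V → Equiv.Perm (Fin n)) (σe : Sym2 V → Equiv.Perm (Fin n))
        (σi : V → Sym2 V → Equiv.Perm (Fin n)),
      (∀ v w, Γ.Adj v w →
        (σi v s(v, w))⁻¹ * σv v ∈ stabCol n (c v) ∧
        (σi v s(v, w))⁻¹ * σe s(v, w) ∈ stabCol n (c v) ⊓ stabCol n (c w)) →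
      ∃! c' : V → Fin n,
        (∀ v w, Γ.Adj v w → c' v ≠ c' w) ∧
        (∀ v, conjSub (σv v) (stabCol n (c v)) = stabCol n (c' v)) ∧
        (∀ v w, Γ.Adj v w →
          conjSub (σe s(v, w)) (stabCol n (c v) ⊓ stabCol n (c w)) =
            stabCol n (c' v) ⊓ stabCol n (c' w))) ∧
    -- (ii)
    (∀ c' : V → Fin n, (∀ v w, Γ.Adj v w → c' v ≠ c' w) →
      ∃ (σv : V → Equiv.Perm (Fin n)) (σe : Sym2 V → Equiv.Perm (Fin n))
          (σi : V → Sym2 V → Equiv.Perm (Fin n)),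
        (∀ v w, Γ.Adj v w →
          (σi v s(v, w))⁻¹ * σv v ∈ stabCol n (c v) ∧
          (σi v s(v, w))⁻¹ * σe s(v, w) ∈ stabCol n (c v) ⊓ stabCol n (c w)) ∧
        (∀ v, conjSub (σv v) (stabCol n (c v)) = stabCol n (c' v)) ∧
        (∀ v w, Γ.Adj v w →
          conjSub (σe s(v, w)) (stabCol n (c v) ⊓ stabCol n (c w)) =
            stabCol n (c' v) ⊓ stabCol n (c' w))) := by
  constructor
  · -- (i)
    intro σv σe σi hM
    have key : ∀ v w, Γ.Adj v w → σe s(v, w) (c v) = σv v (c v) := by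
      intro v w hvw
      obtain ⟨h1, h2⟩ := hM v w hvw
      rw [mem_stabCol] at h1
      rw [Subgroup.mem_inf, mem_stabCol, mem_stabCol] at h2
      simp only [Equiv.Perm.mul_apply] at h1 h2
      have a1 : σv v (c v) = σi v s(v, w) (c v) := by
        have := congrArg (σi v s(v, w)) h1; simpa using this
      have a2 : σe s(v, w) (c v) = σi v s(v, w) (c v) := by
        have := congrArg (σi v s(v, w)) h2.1; simpa using this
      rw [a2, a1]
    have key' : ∀ v w, Γ.Adj v w → σe s(v, w) (c w) = σv w (c w) := by
      intro v w hvw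
      have := key w v hvw.symm
      rwa [Sym2.eq_swap] at this
    refine ⟨fun v => σv v (c v), ⟨?_, ?_, ?_⟩, ?_⟩
    · intro v w hvw h
      simp only at h
      rw [← key v w hvw, ← key' v w hvw] at h
      exact hc v w hvw ((σe s(v, w)).injective h)
    · intro v; exact conjSub_stabCol _ _
    · intro v w hvw
      rw [conjSub_inf, conjSub_stabCol, conjSub_stabCol, key v w hvw, key' v w hvw]
    · intro y hy
      funext v
      have h1 := hy.2.1 v
      rw [conjSub_stabCol] at h1
      exact stabCol_inj hn h1.symm
  · -- (ii)
    intro c' hc'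
    have keyE : ∀ e : Sym2 V, ∃ τ : Equiv.Perm (Fin n),
        ∀ v w, Γ.Adj v w → e = s(v, w) → τ (c v) = c' v ∧ τ (c w) = c' w := by
      intro e
      by_cases h : ∃ v w, Γ.Adj v w ∧ e = s(v, w)
      · obtain ⟨v, w, hvw, rfl⟩ := h
        obtain ⟨τ, h1, h2⟩ := exists_perm_two (hc v w hvw) (hc' v w hvw)
        refine ⟨τ, fun v' w' _ heq => ?_⟩
        rw [Sym2.eq_iff] at heq
        rcases heq with ⟨rfl, rfl⟩ | ⟨rfl, rfl⟩ <;> exact ⟨by assumption, by assumption⟩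
      · exact ⟨1, fun v w hvw heq => absurd ⟨v, w, hvw, heq⟩ h⟩
    choose σe hσe using keyE
    refine ⟨fun v => Equiv.swap (c v) (c' v), σe, fun _ e => σe e, ?_, ?_, ?_⟩
    · intro v w hvw
      obtain ⟨e1, e2⟩ := hσe s(v, w) v w hvw rfl
      refine ⟨?_, by
        rw [inv_mul_cancel]; exact Subgroup.one_mem _⟩
      rw [mem_stabCol]
      simp [Equiv.Perm.mul_apply, Equiv.swap_apply_left, ← e1]
    · intro v
      rw [conjSub_stabCol, Equiv.swap_apply_left]
    · intro v w hvw
      obtain ⟨e1, e2⟩ := hσe s(v, w) v w hvw rfl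
      rw [conjSub_inf, conjSub_stabCol, conjSub_stabCol, e1, e2]
end

section
/- Let Γ = (V,E) be a finite simple graph with incidence set I = {(v,e) : v ∈ e}, and let p : V → ℝ^d satisfy p(v) ≠ p(w) for every edge {v,w}. Let 𝔢(d) be the space of pairs (S,b) with S a skew-symmetric real d×d matrix and b ∈ ℝ^d, acting on z ∈ ℝ^d by (S,b)·z = Sz + b. Set 𝔥_v = {(S,b) ∈ 𝔢(d) : S·p(v) + b = 0} for v ∈ V, 𝔥_e = 𝔥_v ∩ 𝔥_w for e = {v,w}, and 𝔥_i = 𝔥_e for i = (v,e). Let A = {w : V∪E∪I → 𝔢(d) : for every incidence i=(v,e), w(v) − w(i) ∈ 𝔥_v and w(e) − w(i) ∈ 𝔥_e}, and let Inf = {a : V → ℝ^d : ⟨p(v) − p(w), a(v) − a(w)⟩ = 0 for every edge {v,w} ∈ E} be the space of infinitesimal motions of the bar-joint framework (Γ,p). Then the linear map φ : A → Inf defined by φ(w)(v) = w(v)·p(v) is well-defined and surjective, and its kernel equals {w ∈ A : w(x) ∈ 𝔥_x for all x ∈ V∪E∪I}; consequently A/ker(φ) ≅ Inf. -/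
lemma skew_dot_aux {d : ℕ} {S : Matrix (Fin d) (Fin d) ℝ} (hS : S.transpose = -S)
    (x : Fin d → ℝ) : dotProduct x (S.mulVec x) = 0 := by
  have h1 : dotProduct x (S.mulVec x) = dotProduct (S.vecMul x) x :=
    Matrix.dotProduct_mulVec x S x
  have h2 : S.vecMul x = S.transpose.mulVec x := (Matrix.mulVec_transpose S x).symm
  rw [h2, hS, Matrix.neg_mulVec, dotProduct_comm] at h1
  have h3 : dotProduct (S.mulVec x) x = -(dotProduct (S.mulVec x) x) := by
    simpa using h1
  rw [dotProduct_comm]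
  linarith

lemma exists_skew_aux {d : ℕ} (x y : Fin d → ℝ) (hx : x ≠ 0)
    (hxy : dotProduct x y = 0) :
    ∃ S : Matrix (Fin d) (Fin d) ℝ, S.transpose = -S ∧ S.mulVec x = y := by
  have hmv : ∀ a b z : Fin d → ℝ,
      (Matrix.vecMulVec a b).mulVec z = (dotProduct b z) • a := by
    intro a b z
    funext i
    simp [Matrix.mulVec, Matrix.vecMulVec, dotProduct, Finset.mul_sum, mul_assoc,
      mul_comm, mul_left_comm]
  have hxx : dotProduct x x ≠ 0 := by
    simpa [dotProduct_self_eq_zero] using hx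
  refine ⟨(dotProduct x x)⁻¹ • (Matrix.vecMulVec y x - Matrix.vecMulVec x y), ?_, ?_⟩
  · have ht : ∀ a b : Fin d → ℝ, (Matrix.vecMulVec a b).transpose = Matrix.vecMulVec b a := by
      intro a b; ext i j; simp [Matrix.vecMulVec, mul_comm]
    rw [Matrix.transpose_smul, Matrix.transpose_sub, ht, ht, smul_sub, smul_sub]
    abel
  · rw [Matrix.smul_mulVec, Matrix.sub_mulVec, hmv, hmv,
      dotProduct_comm y x, hxy, zero_smul, sub_zero, smul_smul,
      inv_mul_cancel₀ hxx, one_smul]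


lemma rank_aux {M N : Type*} [AddCommGroup M] [Module ℝ M] [AddCommGroup N] [Module ℝ N]
    [FiniteDimensional ℝ M] (Φ : M →ₗ[ℝ] N) (A K : Submodule ℝ M) (Inf : Submodule ℝ N)
    (h1 : ∀ w ∈ A, Φ w ∈ Inf) (h2 : ∀ a ∈ Inf, ∃ w ∈ A, Φ w = a)
    (h3 : ∀ w ∈ A, (Φ w = 0 ↔ w ∈ K)) :
    Module.finrank ℝ ↥A = Module.finrank ℝ ↥Inf + Module.finrank ℝ ↥(A ⊓ K) := by
  have hrange : LinearMap.range (Φ.domRestrict A) = Inf := by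
    rw [LinearMap.range_domRestrict]
    ext a
    simp only [Submodule.mem_map]
    constructor
    · rintro ⟨w, hwA, rfl⟩
      exact h1 w hwA
    · intro haInf
      obtain ⟨w, hwA, hw⟩ := h2 a haInf
      exact ⟨w, hwA, hw⟩
  have hker : LinearMap.ker (Φ.domRestrict A) = Submodule.comap A.subtype (A ⊓ K) := by
    ext ⟨w, hwA⟩
    simp only [LinearMap.mem_ker, Submodule.mem_comap, Submodule.mem_inf,
      LinearMap.domRestrict_apply, Submodule.subtype_apply]
    exact ⟨fun h => ⟨hwA, (h3 w hwA).mp h⟩, fun h => (h3 w hwA).mpr h.2⟩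
  have hrn := LinearMap.finrank_range_add_finrank_ker (Φ.domRestrict A)
  rw [hrange, hker] at hrn
  have heq : Module.finrank ℝ ↥(Submodule.comap A.subtype (A ⊓ K))
      = Module.finrank ℝ ↥(A ⊓ K) :=
    (Submodule.comapSubtypeEquivOfLe inf_le_left).finrank_eq
  rw [heq] at hrn
  omega

set_option maxHeartbeats 1000000 in
set_option synthInstance.maxHeartbeats 400000 in
/-- For a bar-joint framework `(Γ,p)` in `ℝ^d` with `p v ≠ p w` on
edges, the map `φ` sending an element `w` of the space `A` of algebra-valued motion
data (with values in the Lie algebra `𝔢(d)` of pairs `(S,b)`, `S` skew-symmetric) to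
the assignment `v ↦ w(v)·p(v) = S_v (p v) + b_v` is well defined into the space `Inf`
of infinitesimal motions of `(Γ,p)`, surjective onto `Inf`, and its kernel is
`{w ∈ A : w(x) ∈ 𝔥ₓ for all x ∈ V∪E∪I}`; consequently `A/ker(φ) ≅ Inf`
(expressed on dimensions: `dim A = dim Inf + dim(A ∩ K)`). -/
theorem statement_18 (d : ℕ) {V : Type*} [Fintype V] [DecidableEq V]
    (Γ : SimpleGraph V) [DecidableRel Γ.Adj]
    (p : V → (Fin d → ℝ)) (hp : ∀ v w, Γ.Adj v w → p v ≠ p w)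
    -- the Lie algebra 𝔢(d) of pairs (S, b) with S skew-symmetric
    (𝔢 : Submodule ℝ (Matrix (Fin d) (Fin d) ℝ × (Fin d → ℝ)))
    (h𝔢 : ∀ q : Matrix (Fin d) (Fin d) ℝ × (Fin d → ℝ), q ∈ 𝔢 ↔ q.1.transpose = -q.1)
    -- the Lie algebras of the stabilisers of the points p v
    (𝔥v : V → Submodule ℝ ↥𝔢)
    (h𝔥v : ∀ (v : V) (w : ↥𝔢), w ∈ 𝔥v v ↔ w.val.1.mulVec (p v) + w.val.2 = 0)
    -- the Lie algebras attached to the edges: 𝔥_e = 𝔥_v ⊓ 𝔥_w for e = {v,w}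
    (𝔥e : ↥Γ.edgeSet → Submodule ℝ ↥𝔢)
    (h𝔥e : ∀ e : ↥Γ.edgeSet, 𝔥e e = ⨅ v ∈ (e : Sym2 V), 𝔥v v)
    -- the space A of algebra-valued motion data, indexed by V ⊕ E ⊕ I
    (A : Submodule ℝ ((V ⊕ ↥Γ.edgeSet ⊕ {q : V × ↥Γ.edgeSet // q.1 ∈ (q.2 : Sym2 V)}) → ↥𝔢))
    (hA : ∀ w, w ∈ A ↔ ∀ i : {q : V × ↥Γ.edgeSet // q.1 ∈ (q.2 : Sym2 V)},
      w (Sum.inl i.1.1) - w (Sum.inr (Sum.inr i)) ∈ 𝔥v i.1.1 ∧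
      w (Sum.inr (Sum.inl i.1.2)) - w (Sum.inr (Sum.inr i)) ∈ 𝔥e i.1.2)
    -- the space of infinitesimal motions of the bar-joint framework (Γ, p)
    (Inf : Submodule ℝ (V → (Fin d → ℝ)))
    (hInf : ∀ a, a ∈ Inf ↔ ∀ v w, Γ.Adj v w →
      dotProduct (p v - p w) (a v - a w) = 0)
    -- the map φ
    (φ : ((V ⊕ ↥Γ.edgeSet ⊕ {q : V × ↥Γ.edgeSet // q.1 ∈ (q.2 : Sym2 V)}) → ↥𝔢)
      → V → (Fin d → ℝ))
    (hφ : ∀ w v, φ w v = (w (Sum.inl v)).val.1.mulVec (p v) + (w (Sum.inl v)).val.2)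
    -- the submodule K of families with all components in the corresponding algebras
    (K : Submodule ℝ ((V ⊕ ↥Γ.edgeSet ⊕ {q : V × ↥Γ.edgeSet // q.1 ∈ (q.2 : Sym2 V)}) → ↥𝔢))
    (hK : ∀ w, w ∈ K ↔ (∀ v, w (Sum.inl v) ∈ 𝔥v v) ∧
      (∀ e, w (Sum.inr (Sum.inl e)) ∈ 𝔥e e) ∧
      (∀ i : {q : V × ↥Γ.edgeSet // q.1 ∈ (q.2 : Sym2 V)},
        w (Sum.inr (Sum.inr i)) ∈ 𝔥v i.1.1 ⊓ 𝔥e i.1.2)) :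
    -- φ is well defined into Inf
    (∀ w ∈ A, φ w ∈ Inf) ∧
    -- φ is surjective onto Inf
    (∀ a ∈ Inf, ∃ w ∈ A, φ w = a) ∧
    -- the kernel of φ on A is A ∩ K
    (∀ w ∈ A, (φ w = 0 ↔ w ∈ K)) ∧
    -- consequently A / ker φ ≅ Inf
    Module.finrank ℝ ↥A = Module.finrank ℝ ↥Inf + Module.finrank ℝ ↥(A ⊓ K) := by
  classical
  have hle : ∀ (e : ↥Γ.edgeSet) (v : V), v ∈ (e : Sym2 V) → 𝔥e e ≤ 𝔥v v := by
    intro e v hv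
    rw [h𝔥e]
    exact iInf₂_le v hv
  -- Part 1 : well-definedness
  have part1 : ∀ w ∈ A, φ w ∈ Inf := by
    intro w hw
    rw [hInf]
    intro v u hadj
    have he : s(v, u) ∈ Γ.edgeSet := Γ.mem_edgeSet.mpr hadj
    have hv : v ∈ ((⟨s(v, u), he⟩ : ↥Γ.edgeSet) : Sym2 V) := Sym2.mem_mk_left v u
    have hu : u ∈ ((⟨s(v, u), he⟩ : ↥Γ.edgeSet) : Sym2 V) := Sym2.mem_mk_right v u
    set e : ↥Γ.edgeSet := ⟨s(v, u), he⟩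
    -- a common element on the edge
    have key : ∀ (x : V) (hx : x ∈ (e : Sym2 V)),
        w (Sum.inl x) - w (Sum.inr (Sum.inl e)) ∈ 𝔥v x := by
      intro x hx
      have h1 : w (Sum.inl x) - w (Sum.inr (Sum.inr ⟨(x, e), hx⟩)) ∈ 𝔥v x :=
        ((hA w).mp hw ⟨(x, e), hx⟩).1
      have h2 : w (Sum.inr (Sum.inl e)) - w (Sum.inr (Sum.inr ⟨(x, e), hx⟩)) ∈ 𝔥e e :=
        ((hA w).mp hw ⟨(x, e), hx⟩).2
      have h3 : w (Sum.inl x) - w (Sum.inr (Sum.inl e)) =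
          (w (Sum.inl x) - w (Sum.inr (Sum.inr ⟨(x, e), hx⟩))) -
          (w (Sum.inr (Sum.inl e)) - w (Sum.inr (Sum.inr ⟨(x, e), hx⟩))) := by abel
      rw [h3]
      exact sub_mem h1 (hle e x hx h2)
    have hval : ∀ (x : V) (hx : x ∈ (e : Sym2 V)),
        φ w x = (w (Sum.inr (Sum.inl e))).val.1.mulVec (p x)
          + (w (Sum.inr (Sum.inl e))).val.2 := by
      intro x hx
      have h := (h𝔥v x _).mp (key x hx)
      simp only [Submodule.coe_sub, Prod.fst_sub, Prod.snd_sub, Matrix.sub_mulVec] at h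
      rw [hφ]
      have h4 : ((w (Sum.inl x)).val.1.mulVec (p x) + (w (Sum.inl x)).val.2) -
          ((w (Sum.inr (Sum.inl e))).val.1.mulVec (p x) + (w (Sum.inr (Sum.inl e))).val.2) =
          ((w (Sum.inl x)).val.1.mulVec (p x) - (w (Sum.inr (Sum.inl e))).val.1.mulVec (p x) +
            ((w (Sum.inl x)).val.2 - (w (Sum.inr (Sum.inl e))).val.2)) := by abel
      have h5 := h4.trans h
      exact sub_eq_zero.mp h5
    rw [hval v hv, hval u hu]
    have h6 : ((w (Sum.inr (Sum.inl e))).val.1.mulVec (p v)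
          + (w (Sum.inr (Sum.inl e))).val.2) -
        ((w (Sum.inr (Sum.inl e))).val.1.mulVec (p u)
          + (w (Sum.inr (Sum.inl e))).val.2) =
        (w (Sum.inr (Sum.inl e))).val.1.mulVec (p v - p u) := by
      rw [Matrix.mulVec_sub]; abel
    rw [h6]
    exact skew_dot_aux ((h𝔢 _).mp (w (Sum.inr (Sum.inl e))).2) (p v - p u)
  -- Part 2 : surjectivity
  have part2 : ∀ a ∈ Inf, ∃ w ∈ A, φ w = a := by
    intro a ha
    have key0 : ∀ e : Sym2 V, e ∈ Γ.edgeSet → ∃ q : ↥𝔢,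
        ∀ x ∈ e, q.val.1.mulVec (p x) + q.val.2 = a x := by
      intro e
      induction e using Sym2.ind with
      | _ v u =>
        intro he
        have hadj : Γ.Adj v u := Γ.mem_edgeSet.mp he
        have hdot := (hInf a).mp ha v u hadj
        have hne : p v - p u ≠ 0 := sub_ne_zero.mpr (hp v u hadj)
        obtain ⟨S, hSkew, hSx⟩ := exists_skew_aux (p v - p u) (a v - a u) hne hdot
        refine ⟨⟨(S, a v - S.mulVec (p v)), (h𝔢 _).mpr hSkew⟩, ?_⟩
        intro x hx
        rw [Sym2.mem_iff] at hx
        rw [Matrix.mulVec_sub] at hSx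
        rcases hx with rfl | rfl
        · simp
        · have h6 : S.mulVec (p v) - S.mulVec (p x) - (a v - a x) = 0 := by
            rw [hSx]; abel
          have h7 : (S, a v - S.mulVec (p v)).1.mulVec (p x)
              + (S, a v - S.mulVec (p v)).2 - a x =
              -(S.mulVec (p v) - S.mulVec (p x) - (a v - a x)) := by
            simp only []; abel
          rw [h6, neg_zero] at h7
          exact sub_eq_zero.mp h7
    have key : ∀ e : ↥Γ.edgeSet, ∃ q : ↥𝔢,
        ∀ x ∈ (e : Sym2 V), q.val.1.mulVec (p x) + q.val.2 = a x :=
      fun e => key0 e.val e.property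
    choose q hq using key
    refine ⟨Sum.elim
      (fun v => (⟨((0 : Matrix (Fin d) (Fin d) ℝ), a v), (h𝔢 _).mpr (by simp)⟩ : ↥𝔢))
      (Sum.elim q (fun i => q i.1.2)), ?_, ?_⟩
    · rw [hA]
      rintro ⟨⟨v, e⟩, hv⟩
      constructor
      · rw [h𝔥v]
        have hqe := hq e v hv
        simp only [Sum.elim_inl, Sum.elim_inr, Submodule.coe_sub, Prod.fst_sub, Prod.snd_sub,
          Matrix.sub_mulVec, Matrix.zero_mulVec]
        rw [← hqe]; abel
      · simp only [Sum.elim_inl, Sum.elim_inr, sub_self]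
        exact (𝔥e _).zero_mem
    · funext v
      rw [hφ]
      simp
  -- Part 3 : the kernel
  have part3 : ∀ w ∈ A, (φ w = 0 ↔ w ∈ K) := by
    intro w hwA
    constructor
    · intro h0
      have hvmem : ∀ v, w (Sum.inl v) ∈ 𝔥v v := by
        intro v
        rw [h𝔥v]
        have h := congrFun h0 v
        rw [hφ] at h
        simpa using h
      have himem : ∀ i : {q : V × ↥Γ.edgeSet // q.1 ∈ (q.2 : Sym2 V)},
          w (Sum.inr (Sum.inr i)) ∈ 𝔥e i.1.2 := by
        intro i
        rw [h𝔥e, Submodule.mem_iInf]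
        intro x
        rw [Submodule.mem_iInf]
        intro hx
        have h2 : w (Sum.inr (Sum.inl i.1.2)) - w (Sum.inr (Sum.inr i)) ∈ 𝔥e i.1.2 :=
          ((hA w).mp hwA i).2
        have h1' : w (Sum.inl x) - w (Sum.inr (Sum.inr ⟨(x, i.1.2), hx⟩)) ∈ 𝔥v x :=
          ((hA w).mp hwA ⟨(x, i.1.2), hx⟩).1
        have h2' : w (Sum.inr (Sum.inl i.1.2)) - w (Sum.inr (Sum.inr ⟨(x, i.1.2), hx⟩))
            ∈ 𝔥e i.1.2 := ((hA w).mp hwA ⟨(x, i.1.2), hx⟩).2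
        have ha' : w (Sum.inr (Sum.inr ⟨(x, i.1.2), hx⟩)) ∈ 𝔥v x := by
          have h := (𝔥v x).sub_mem (hvmem x) h1'
          simpa using h
        have hb : w (Sum.inr (Sum.inr i)) - w (Sum.inr (Sum.inr ⟨(x, i.1.2), hx⟩)) ∈ 𝔥v x := by
          have h := (𝔥e i.1.2).sub_mem h2' h2
          have h3 : (w (Sum.inr (Sum.inl i.1.2)) - w (Sum.inr (Sum.inr ⟨(x, i.1.2), hx⟩))) -
              (w (Sum.inr (Sum.inl i.1.2)) - w (Sum.inr (Sum.inr i))) =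
              w (Sum.inr (Sum.inr i)) - w (Sum.inr (Sum.inr ⟨(x, i.1.2), hx⟩)) := by abel
          rw [h3] at h
          exact hle i.1.2 x hx h
        have h := (𝔥v x).add_mem hb ha'
        simpa using h
      have hemem : ∀ e, w (Sum.inr (Sum.inl e)) ∈ 𝔥e e := by
        intro e
        have hex : ∃ v, v ∈ (e : Sym2 V) := by
          induction (e : Sym2 V) using Sym2.ind with
          | _ v u => exact ⟨v, Sym2.mem_mk_left v u⟩
        obtain ⟨v, hv⟩ := hex
        have h2 : w (Sum.inr (Sum.inl e)) - w (Sum.inr (Sum.inr ⟨(v, e), hv⟩)) ∈ 𝔥e e :=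
          ((hA w).mp hwA ⟨(v, e), hv⟩).2
        have h := (𝔥e e).add_mem h2 (himem ⟨(v, e), hv⟩)
        simpa using h
      rw [hK]
      exact ⟨hvmem, hemem, fun i => ⟨hle i.1.2 i.1.1 i.2 (himem i), himem i⟩⟩
    · intro hwK
      funext v
      have h := ((hK w).mp hwK).1 v
      rw [h𝔥v] at h
      rw [hφ]
      simpa using h
  refine ⟨part1, part2, part3, ?_⟩
  -- Part 4 : the dimension count
  let Φ : ((V ⊕ ↥Γ.edgeSet ⊕ {q : V × ↥Γ.edgeSet // q.1 ∈ (q.2 : Sym2 V)}) → ↥𝔢)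
      →ₗ[ℝ] (V → (Fin d → ℝ)) :=
    { toFun := fun w v => (w (Sum.inl v)).val.1.mulVec (p v) + (w (Sum.inl v)).val.2
      map_add' := by
        intro w w'
        funext v
        simp only [Pi.add_apply, Submodule.coe_add, Prod.fst_add, Prod.snd_add,
          Matrix.add_mulVec]
        abel
      map_smul' := by
        intro c w
        funext v
        simp only [Pi.smul_apply, SetLike.val_smul, Prod.smul_fst, Prod.smul_snd,
          Matrix.smul_mulVec, RingHom.id_apply, smul_add] }
  have hΦ : ∀ w, Φ w = φ w := fun w => funext fun v => (hφ w v).symm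
  haveI : Fintype {q : V × ↥Γ.edgeSet // q.1 ∈ (q.2 : Sym2 V)} := Fintype.ofFinite _
  haveI : FiniteDimensional ℝ
      ((V ⊕ ↥Γ.edgeSet ⊕ {q : V × ↥Γ.edgeSet // q.1 ∈ (q.2 : Sym2 V)}) → ↥𝔢) :=
    inferInstance
  exact rank_aux Φ A K Inf
    (fun w hw => by rw [hΦ]; exact part1 w hw)
    (fun a ha => by
      obtain ⟨w, hwA, hw⟩ := part2 a ha
      exact ⟨w, hwA, by rw [hΦ, hw]⟩)
    (fun w hw => by rw [hΦ]; exact part3 w hw)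
end
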